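/- arXiv:math/0512433 — 8 statements merged into one kernel-verified Lean document; each statement's English description precedes it below -/
import Mathlib

section
/- For all integers k ≥ 0 and b, the identity [2k+2 choose k+1] · Ỹ(k,b) = (−1)^k [2k+1 choose k] · ( [2k+2 choose k+1] + Σ_{n=1}^{k+1} (−1)^n [2k+2 choose k+1−n] (v^n + v^{−n}) q^{b n^2} ) holds in ℤ[v^{±1}]. -/
/-! Since `q^{b(j-k)^2}` only depends on `|j - k|`, the terms `j = k - n` and `j = k + n` of
`Ỹ(k,b)` pair up. Absorption `{N+1}[N choose j] = {j+1}[N+1 choose j+1]` and the symmetry of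
`[2k+2 choose ·]` give
`{2k+2}([2k+1 choose k-n] + [2k+1 choose k+n]) = ({k+1-n} + {k+1+n})[2k+2 choose k+1-n]`,
and `{k+1-n} + {k+1+n} = (v^n + v^{-n}){k+1}`. The unpaired term `j = 2k+1` is the case
`n = k+1`, through `{2k+2} = (v^{k+1} + v^{-k-1}){k+1}`. Finally
`{2k+2}[2k+1 choose k] = {k+1}[2k+2 choose k+1]` turns the common factor `{k+1}/{2k+2}` into the
one of the theorem. -/

noncomputable section

/-- The variable `v`, as a rational function. -/
def v : RatFunc ℚ := RatFunc.X

/-- `{n} = v^n − v^{−n}`. -/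
def br (n : ℤ) : RatFunc ℚ := v ^ n - v ^ (-n)

/-- `{n}! = ∏_{i=1}^n {i}`. -/
def brfac (n : ℕ) : RatFunc ℚ := ∏ i ∈ Finset.range n, br (i + 1)

/-- The balanced Gaussian binomial `[n choose j] = {n}!/({j}!{n−j}!)`. -/
def qbin (n j : ℕ) : RatFunc ℚ := brfac n / (brfac j * brfac (n - j))

/-- `Ỹ(k,b) = Σ_{j=0}^{2k+1} (−1)^j [2k+1 choose j] q^{b(j−k)^2}` with `q = v²`. -/
def Yt (k : ℕ) (b : ℤ) : RatFunc ℚ :=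
  ∑ j ∈ Finset.range (2 * k + 2),
    (-1) ^ j * qbin (2 * k + 1) j * (v ^ 2) ^ (b * ((j : ℤ) - (k : ℤ)) ^ 2)

open Finset

lemma sum_range_two_mul_add_two {M : Type*} [AddCommMonoid M] (f : ℕ → M) (k : ℕ) :
    ∑ j ∈ range (2 * k + 2), f j =
      f k + ∑ n ∈ Icc 1 k, (f (k - n) + f (k + n)) + f (2 * k + 1) := by
  have Icc_one (g : ℕ → M) : ∑ n ∈ Icc 1 k, g n = ∑ i ∈ range k, g (i + 1) := by
    rw [← Ico_add_one_right_eq_Icc, sum_Ico_eq_sum_range, Nat.add_sub_cancel]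
    simp only [add_comm 1]
  have lower : ∑ j ∈ range (k + 1), f j = f k + ∑ n ∈ Icc 1 k, f (k - n) := by
    rw [← sum_range_reflect, sum_range_succ', Icc_one, add_comm]
    simp only [Nat.add_sub_cancel, Nat.sub_zero]
  have upper : ∑ j ∈ range (k + 1), f (k + 1 + j) = ∑ n ∈ Icc 1 k, f (k + n) + f (2 * k + 1) := by
    rw [sum_range_succ, Icc_one, two_mul, add_right_comm]
    simp only [add_right_comm k 1, add_assoc]
  rw [show 2 * k + 2 = (k + 1) + (k + 1) by ring, sum_range_add, lower, upper, sum_add_distrib]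
  abel

lemma v_ne_zero : v ≠ 0 := RatFunc.X_ne_zero

lemma v_pow_ne_one {m : ℕ} (hm : m ≠ 0) : v ^ m ≠ 1 := by
  intro h
  have hX : (Polynomial.X ^ m : Polynomial ℚ) = 1 :=
    RatFunc.algebraMap_injective ℚ (by simpa [RatFunc.algebraMap_X, v] using h)
  simpa [hm] using congrArg Polynomial.natDegree hX

lemma br_natCast_ne_zero {n : ℕ} (hn : n ≠ 0) : br n ≠ 0 := by
  intro h
  rw [br, zpow_neg, zpow_natCast, sub_eq_zero] at h
  apply v_pow_ne_one (m := n + n) (by omega)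
  rw [pow_add]
  nth_rw 2 [h]
  exact mul_inv_cancel₀ (pow_ne_zero n v_ne_zero)

lemma br_natCast_add_one_ne_zero (n : ℕ) : br ((n : ℤ) + 1) ≠ 0 := by
  exact_mod_cast br_natCast_ne_zero n.succ_ne_zero

lemma br_add_add_br_sub (s t : ℤ) : br (s + t) + br (s - t) = (v ^ t + v ^ (-t)) * br s := by
  simp only [br, zpow_add₀ v_ne_zero, zpow_sub₀ v_ne_zero, neg_add, neg_sub, zpow_neg]
  ring

lemma brfac_ne_zero (n : ℕ) : brfac n ≠ 0 :=
  prod_ne_zero_iff.mpr fun i _ => br_natCast_add_one_ne_zero i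

lemma brfac_succ (n : ℕ) : brfac (n + 1) = brfac n * br ((n : ℤ) + 1) := by
  rw [brfac, brfac, prod_range_succ]

lemma brfac_zero : brfac 0 = 1 := prod_range_zero _

lemma qbin_zero (n : ℕ) : qbin n 0 = 1 := by
  rw [qbin, Nat.sub_zero, brfac_zero, one_mul, div_self (brfac_ne_zero n)]

lemma qbin_self (n : ℕ) : qbin n n = 1 := by
  rw [qbin, Nat.sub_self, brfac_zero, mul_one, div_self (brfac_ne_zero n)]

lemma qbin_sub {n j : ℕ} (h : j ≤ n) : qbin n (n - j) = qbin n j := by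
  rw [qbin, qbin, Nat.sub_sub_self h, mul_comm]

lemma br_mul_qbin (n j : ℕ) :
    br ((n : ℤ) + 1) * qbin n j = br ((j : ℤ) + 1) * qbin (n + 1) (j + 1) := by
  have := brfac_ne_zero j
  have := brfac_ne_zero (n - j)
  have := br_natCast_add_one_ne_zero j
  rw [qbin, qbin, Nat.add_sub_add_right, brfac_succ, brfac_succ]
  field_simp

lemma br_mul_qbin_add_qbin {k n : ℕ} (h : n ≤ k) :
    br (2 * k + 2) * (qbin (2 * k + 1) (k - n) + qbin (2 * k + 1) (k + n)) =
      (v ^ (n : ℤ) + v ^ (-(n : ℤ))) * br (k + 1) * qbin (2 * k + 2) (k + 1 - n) := by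
  have lower := br_mul_qbin (2 * k + 1) (k - n)
  have upper := br_mul_qbin (2 * k + 1) (k + n)
  have symm : qbin (2 * k + 2) (k + n + 1) = qbin (2 * k + 2) (k + 1 - n) := by
    rw [← qbin_sub (show k + 1 - n ≤ 2 * k + 2 by omega)]
    congr 1
    omega
  rw [show k - n + 1 = k + 1 - n by omega, show 2 * k + 1 + 1 = 2 * k + 2 from rfl] at lower
  rw [show 2 * k + 1 + 1 = 2 * k + 2 from rfl, symm] at upper
  have sum := br_add_add_br_sub (k + 1) n
  push_cast [Nat.cast_sub h] at lower upper
  rw [show (2 : ℤ) * k + 1 + 1 = 2 * k + 2 by ring] at lower upper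
  rw [show (k : ℤ) + 1 + n = k + n + 1 by ring, show (k : ℤ) + 1 - n = k - n + 1 by ring] at sum
  linear_combination lower + upper + qbin (2 * k + 2) (k + 1 - n) * sum

lemma br_mul_qbin_middle (k : ℕ) :
    br (2 * k + 2) * qbin (2 * k + 1) k = br (k + 1) * qbin (2 * k + 2) (k + 1) := by
  have absorb := br_mul_qbin (2 * k + 1) k
  push_cast at absorb
  rwa [show (2 : ℤ) * k + 1 + 1 = 2 * k + 2 by ring] at absorb

lemma br_two_mul (s : ℤ) : br (2 * s) = (v ^ s + v ^ (-s)) * br s := by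
  simpa [br, two_mul] using br_add_add_br_sub s s

lemma br_mul_qbin_last (k : ℕ) :
    br (2 * k + 2) * qbin (2 * k + 1) (2 * k + 1) =
      (v ^ ((k + 1 : ℕ) : ℤ) + v ^ (-((k + 1 : ℕ) : ℤ))) * br (k + 1) *
        qbin (2 * k + 2) (k + 1 - (k + 1)) := by
  have double := br_two_mul ((k : ℤ) + 1)
  rw [show (2 : ℤ) * (k + 1) = 2 * k + 2 by ring] at double
  rw [qbin_self, Nat.sub_self, qbin_zero]
  push_cast
  linear_combination double

lemma br_mul_Yt (k : ℕ) (b : ℤ) :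
    br (2 * k + 2) * Yt k b =
      (-1) ^ k * br (k + 1) *
        (qbin (2 * k + 2) (k + 1) +
          ∑ n ∈ Icc 1 (k + 1),
            (-1) ^ n * qbin (2 * k + 2) (k + 1 - n) * (v ^ (n : ℤ) + v ^ (-(n : ℤ))) *
              (v ^ 2) ^ (b * (n : ℤ) ^ 2)) := by
  have center :
      br (2 * k + 2) * ((-1) ^ k * qbin (2 * k + 1) k * (v ^ 2) ^ (b * ((k : ℤ) - k) ^ 2)) =
        (-1) ^ k * br (k + 1) * qbin (2 * k + 2) (k + 1) := by
    rw [sub_self, zero_pow two_ne_zero, mul_zero, zpow_zero, mul_one]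
    linear_combination (-1) ^ k * br_mul_qbin_middle k
  have pair : ∀ n ∈ Icc 1 k, br (2 * k + 2) *
      ((-1) ^ (k - n) * qbin (2 * k + 1) (k - n) * (v ^ 2) ^ (b * (((k - n : ℕ) : ℤ) - k) ^ 2) +
        (-1) ^ (k + n) * qbin (2 * k + 1) (k + n) * (v ^ 2) ^ (b * (((k + n : ℕ) : ℤ) - k) ^ 2)) =
      (-1) ^ k * br (k + 1) * ((-1) ^ n * qbin (2 * k + 2) (k + 1 - n) *
        (v ^ (n : ℤ) + v ^ (-(n : ℤ))) * (v ^ 2) ^ (b * (n : ℤ) ^ 2)) := by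
    intro n hn
    have hnk : n ≤ k := (mem_Icc.mp hn).2
    have sign : (-1 : RatFunc ℚ) ^ (k - n) = (-1) ^ (k + n) := by
      rw [show k + n = k - n + 2 * n by omega, pow_add, pow_mul, neg_one_sq, one_pow, mul_one]
    have dist_lower : (((k - n : ℕ) : ℤ) - k) ^ 2 = (n : ℤ) ^ 2 := by
      push_cast [Nat.cast_sub hnk]
      ring
    have dist_upper : (((k + n : ℕ) : ℤ) - k) ^ 2 = (n : ℤ) ^ 2 := by push_cast; ring
    rw [sign, dist_lower, dist_upper]
    linear_combination (-1) ^ (k + n) * (v ^ 2) ^ (b * (n : ℤ) ^ 2) * br_mul_qbin_add_qbin hnk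
  have top : br (2 * k + 2) * ((-1) ^ (2 * k + 1) * qbin (2 * k + 1) (2 * k + 1) *
        (v ^ 2) ^ (b * (((2 * k + 1 : ℕ) : ℤ) - k) ^ 2)) =
      (-1) ^ k * br (k + 1) * ((-1) ^ (k + 1) * qbin (2 * k + 2) (k + 1 - (k + 1)) *
        (v ^ ((k + 1 : ℕ) : ℤ) + v ^ (-((k + 1 : ℕ) : ℤ))) *
          (v ^ 2) ^ (b * ((k + 1 : ℕ) : ℤ) ^ 2)) := by
    have sign : (-1 : RatFunc ℚ) ^ (2 * k + 1) = (-1) ^ k * (-1) ^ (k + 1) := by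
      rw [← pow_add, show k + (k + 1) = 2 * k + 1 by ring]
    have dist : (((2 * k + 1 : ℕ) : ℤ) - k) ^ 2 = ((k + 1 : ℕ) : ℤ) ^ 2 := by push_cast; ring
    rw [sign, dist]
    linear_combination
      (-1) ^ k * (-1) ^ (k + 1) * (v ^ 2) ^ (b * ((k + 1 : ℕ) : ℤ) ^ 2) * br_mul_qbin_last k
  rw [Yt, sum_range_two_mul_add_two, sum_Icc_succ_top (by omega), mul_add, mul_add, mul_sum,
    center, sum_congr rfl pair, top, ← mul_sum]
  ring

/-- For all integers `k ≥ 0` and `b`, one has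
`[2k+2 choose k+1]·Ỹ(k,b) = (−1)^k [2k+1 choose k]·([2k+2 choose k+1] +
Σ_{n=1}^{k+1} (−1)^n [2k+2 choose k+1−n](v^n + v^{−n}) q^{b n²})`. -/
theorem Yt_symmetrized_identity (k : ℕ) (b : ℤ) :
    qbin (2 * k + 2) (k + 1) * Yt k b =
      (-1) ^ k * qbin (2 * k + 1) k *
        (qbin (2 * k + 2) (k + 1) +
          ∑ n ∈ Finset.Icc 1 (k + 1),
            (-1) ^ n * qbin (2 * k + 2) (k + 1 - n) * (v ^ (n : ℤ) + v ^ (-(n : ℤ))) *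
              (v ^ 2) ^ (b * (n : ℤ) ^ 2)) := by
  have hbr : br (2 * k + 2) ≠ 0 := by
    exact_mod_cast br_natCast_ne_zero (n := 2 * k + 2) (by omega)
  apply mul_left_cancel₀ hbr
  rw [mul_left_comm, br_mul_Yt, ← mul_assoc (br _), mul_left_comm (br _), br_mul_qbin_middle]
  ring

end
end

section
/- For ε ∈ {+1, −1}, one has Σ^ξ_n ξ^{ε(n^2−1)/4} · ( (w^n − w^{−n})/(w − w^{−1}) )^2 = −2ε · γ_ε(ξ) · w^{−ε}/(w − w^{−1}), and in particular this complex number is nonzero. -/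
/-!
Put `n = 2k + 1`, so that `(n² - 1)/4 = k(k + 1)` and `(w^n - w^{-n})² = ξ^n + ξ^{-n} - 2`.
Viewing `k` in `ZMod r` and `ξ^·` as an additive character `ψ` of `ZMod r`, the sum becomes
`∑ₖ ψ(εk(k+1)) (ψ(2k+1) + ψ(-(2k+1)) - 2) / (w - w⁻¹)²`. Completing the square,
`εk(k+1) ± (2k+1) = ε(k ± ε)(k ± ε + 1) - ε`, so both twisted sums equal `ξ^{-ε} γ_ε`, and the total
is `2(ξ^{-ε} - 1) γ_ε / (w - w⁻¹)² = -2ε γ_ε w^{-ε} / (w - w⁻¹)`.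

For the nonvanishing, `γ_ε γ_{-ε} = ∑ₜ ψ(εt(t+1)) ∑ₓ ψ(2εtx) = r` by orthogonality, because `2ε`
is a unit modulo the odd number `r`; and `w² = ξ ≠ 1` makes `w - w⁻¹` nonzero.
-/

open Finset

theorem sum_filter_odd_range_two_mul {M : Type*} [AddCommMonoid M] (r : ℕ) (f : ℕ → M) :
    ∑ n ∈ (range (2 * r)).filter (fun n => Odd n), f n = ∑ k ∈ range r, f (2 * k + 1) := by
  refine sum_nbij' (· / 2) (2 * · + 1) ?_ ?_ ?_ ?_ ?_ <;>
    simp only [mem_filter, mem_range, Nat.odd_iff] <;> intros <;> first | omega | (congr 1; omega)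

theorem ZMod.sum_range_natCast {M : Type*} [AddCommMonoid M] (n : ℕ) [NeZero n]
    (f : ZMod n → M) : ∑ k ∈ range n, f k = ∑ x, f x :=
  sum_nbij' Nat.cast ZMod.val (by simp) (by simp [ZMod.val_lt])
    (by simp +contextual [Nat.mod_eq_of_lt]) (by simp) (by simp)

theorem AddChar.zmodChar_intCast {C : Type*} [DivisionCommMonoid C] (n : ℕ) [NeZero n] {ζ : C}
    (hζ : ζ ^ n = 1) (m : ℤ) : zmodChar n hζ m = ζ ^ m := by
  rw [← zsmul_one, map_zsmul_eq_zpow, ← Nat.cast_one, zmodChar_apply', pow_one]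

section QuadraticGaussSum

variable {R R' : Type*} [CommRing R] [Fintype R] [CommRing R']

def quadGaussSum (ψ : AddChar R R') (a : R) : R' := ∑ x, ψ (a * (x * (x + 1)))

theorem sum_addChar_quad_add_linear (ψ : AddChar R R') {a b : R} (hab : a * b = 1) (c : R) :
    ∑ x, ψ (a * (x * (x + 1)) + c * (2 * x + 1)) = ψ (-(c ^ 2 * b)) * quadGaussSum ψ a := by
  rw [quadGaussSum, mul_sum, ← Equiv.sum_comp (Equiv.addRight (c * b))
    (fun x => ψ (-(c ^ 2 * b)) * ψ (a * (x * (x + 1))))]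
  refine sum_congr rfl fun x _ => ?_
  rw [Equiv.coe_addRight, ← AddChar.map_add_eq_mul]
  congr 1
  linear_combination (-(2 * c * x) - c - c ^ 2 * b) * hab

theorem sum_addChar_quad_mul_shift_sub_two (ψ : AddChar R R') {a : R} (ha : a * a = 1) :
    ∑ x, ψ (a * (x * (x + 1))) * (ψ (2 * x + 1) + ψ (-(2 * x + 1)) - 2) =
      2 * (ψ (-a) - 1) * quadGaussSum ψ a := by
  have hplus := sum_addChar_quad_add_linear ψ ha 1
  have hminus := sum_addChar_quad_add_linear ψ ha (-1)
  simp only [one_mul, neg_one_mul, neg_sq, one_pow] at hplus hminus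
  have hsplit : ∀ x, ψ (a * (x * (x + 1))) * (ψ (2 * x + 1) + ψ (-(2 * x + 1)) - 2) =
      ψ (a * (x * (x + 1)) + (2 * x + 1)) + ψ (a * (x * (x + 1)) + -(2 * x + 1)) -
        2 * ψ (a * (x * (x + 1))) := by
    intro x
    rw [AddChar.map_add_eq_mul ψ (a * (x * (x + 1))), AddChar.map_add_eq_mul ψ (a * (x * (x + 1)))]
    ring
  rw [sum_congr rfl fun x _ => hsplit x, sum_sub_distrib, sum_add_distrib, hplus, hminus, ← mul_sum,
    ← quadGaussSum]
  ring

theorem quadGaussSum_mul_quadGaussSum_neg [IsDomain R'] {ψ : AddChar R R'} (hψ : ψ.IsPrimitive)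
    {a : R} (ha : IsUnit (2 * a)) :
    quadGaussSum ψ a * quadGaussSum ψ (-a) = Fintype.card R := by
  classical
  calc quadGaussSum ψ a * quadGaussSum ψ (-a)
      = ∑ y, ∑ x, ψ (a * (x * (x + 1))) * ψ (-a * (y * (y + 1))) := by
        rw [quadGaussSum, quadGaussSum, sum_mul_sum, sum_comm]
    _ = ∑ y, ∑ t, ψ (a * (t * (t + 1))) * ψ (y * (2 * a * t)) := by
        refine sum_congr rfl fun y _ => ?_
        rw [← Equiv.sum_comp (Equiv.addRight y)]
        refine sum_congr rfl fun t _ => ?_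
        rw [Equiv.coe_addRight, ← AddChar.map_add_eq_mul, ← AddChar.map_add_eq_mul]
        ring_nf
    _ = ∑ t, ψ (a * (t * (t + 1))) * ∑ y, ψ (y * (2 * a * t)) := by
        rw [sum_comm]
        simp_rw [mul_sum]
    _ = Fintype.card R := by
        simp [AddChar.sum_mulShift _ hψ, ha.mul_right_eq_zero]

theorem quadGaussSum_ne_zero [IsDomain R'] [CharZero R'] {ψ : AddChar R R'} (hψ : ψ.IsPrimitive)
    {a : R} (ha : IsUnit (2 * a)) : quadGaussSum ψ a ≠ 0 := fun h => by
  simpa [h, eq_comm] using quadGaussSum_mul_quadGaussSum_neg hψ ha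

end QuadraticGaussSum

theorem pow_succ_div_two_sq {M : Type*} [Monoid M] {r : ℕ} (hodd : Odd r) {ξ : M}
    (hξ : ξ ^ r = 1) : (ξ ^ ((r + 1) / 2)) ^ 2 = ξ := by
  rw [← pow_mul, Nat.div_mul_cancel hodd.add_one.two_dvd, pow_succ, hξ, one_mul]

theorem sub_inv_ne_zero_of_sq_ne_one {K : Type*} [Field K] {w : K} (hw0 : w ≠ 0)
    (hw : w ^ 2 ≠ 1) : w - w⁻¹ ≠ 0 :=
  fun h => hw (by rw [sq]; nth_rewrite 2 [sub_eq_zero.mp h]; exact mul_inv_cancel₀ hw0)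

theorem zpow_sub_zpow_neg_sq {K : Type*} [Field K] {w : K} (hw : w ≠ 0) (m : ℤ) :
    (w ^ m - w ^ (-m)) ^ 2 = (w ^ 2) ^ m + (w ^ 2) ^ (-m) - 2 := by
  have hinv : w ^ m * w ^ (-m) = 1 := by rw [← zpow_add₀ hw, add_neg_cancel, zpow_zero]
  rw [sq w, mul_zpow, mul_zpow]
  linear_combination (-2) * hinv

theorem two_mul_sq_zpow_neg_sub_one {K : Type*} [Field K] {w : K} (hw : w ≠ 0) {ε : ℤ}
    (hε : ε = 1 ∨ ε = -1) : 2 * ((w ^ 2) ^ (-ε) - 1) = -2 * ε * w ^ (-ε) * (w - w⁻¹) := by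
  rcases hε with rfl | rfl <;> simp only [neg_neg, zpow_neg, zpow_one] <;> field_simp <;> ring

theorem Int.mul_two_mul_add_one_sq_sub_one_ediv_four (ε k : ℤ) :
    ε * ((2 * k + 1) ^ 2 - 1) / 4 = ε * (k * (k + 1)) := by
  rw [show ε * ((2 * k + 1) ^ 2 - 1) = ε * (k * (k + 1)) * 4 by ring,
    Int.mul_ediv_cancel _ four_ne_zero]

section OddSums

variable {K : Type*} [Field K] {r : ℕ} [NeZero r] {ξ : K} (ψ : AddChar (ZMod r) K)

theorem sum_filter_odd_zpow_eq_quadGaussSum (hψ : ∀ m : ℤ, ψ m = ξ ^ m) (ε : ℤ) :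
    ∑ n ∈ (range (2 * r)).filter (fun n => Odd n), ξ ^ (ε * ((n : ℤ) ^ 2 - 1) / 4) =
      quadGaussSum ψ (ε : ZMod r) := by
  rw [sum_filter_odd_range_two_mul, quadGaussSum, ← ZMod.sum_range_natCast]
  refine sum_congr rfl fun k _ => ?_
  push_cast
  rw [Int.mul_two_mul_add_one_sq_sub_one_ediv_four, ← hψ]
  push_cast
  rfl

theorem sum_filter_odd_zpow_mul_quantum_sq (hψ : ∀ m : ℤ, ψ m = ξ ^ m) {w : K} (hw2 : w ^ 2 = ξ)
    (hw0 : w ≠ 0) {ε : ℤ} (hε : (ε : ZMod r) * ε = 1) :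
    ∑ n ∈ (range (2 * r)).filter (fun n => Odd n),
        ξ ^ (ε * ((n : ℤ) ^ 2 - 1) / 4) * ((w ^ (n : ℤ) - w ^ (-(n : ℤ))) / (w - w⁻¹)) ^ 2 =
      2 * (ξ ^ (-ε) - 1) * quadGaussSum ψ (ε : ZMod r) / (w - w⁻¹) ^ 2 := by
  rw [sum_filter_odd_range_two_mul, ← hψ (-ε), Int.cast_neg,
    ← sum_addChar_quad_mul_shift_sub_two ψ hε, sum_div, ← ZMod.sum_range_natCast]
  refine sum_congr rfl fun k _ => ?_
  push_cast
  rw [Int.mul_two_mul_add_one_sq_sub_one_ediv_four, div_pow, zpow_sub_zpow_neg_sq hw0, hw2,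
    ← hψ, ← hψ, ← hψ]
  push_cast
  ring

end OddSums

/-- Let `r ≥ 3` be odd, `ξ` a primitive `r`-th root of unity, and
`w = ξ^{(r+1)/2}` (so `w² = ξ`).  For `ε ∈ {+1,−1}` one has
`Σ^ξ_n ξ^{ε(n²−1)/4}·((w^n − w^{−n})/(w − w^{−1}))² = −2ε·γ_ε(ξ)·w^{−ε}/(w − w^{−1})`,
and in particular this complex number is nonzero.  Sums run over odd `n`, `0 < n < 2r`. -/
theorem unknot_bracket_value (r : ℕ) (hr : 3 ≤ r) (hodd : Odd r) (ξ : ℂ)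
    (hξ : IsPrimitiveRoot ξ r) (ε : ℤ) (hε : ε = 1 ∨ ε = -1) :
    (∑ n ∈ (Finset.range (2 * r)).filter (fun n => Odd n),
        ξ ^ (ε * ((n : ℤ) ^ 2 - 1) / 4) *
          (((ξ ^ ((r + 1) / 2)) ^ (n : ℤ) - (ξ ^ ((r + 1) / 2)) ^ (-(n : ℤ))) /
            (ξ ^ ((r + 1) / 2) - (ξ ^ ((r + 1) / 2))⁻¹)) ^ 2) =
      -2 * (ε : ℂ) *
        (∑ n ∈ (Finset.range (2 * r)).filter (fun n => Odd n),
          ξ ^ (ε * ((n : ℤ) ^ 2 - 1) / 4)) *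
        (ξ ^ ((r + 1) / 2)) ^ (-ε) / (ξ ^ ((r + 1) / 2) - (ξ ^ ((r + 1) / 2))⁻¹) ∧
    (∑ n ∈ (Finset.range (2 * r)).filter (fun n => Odd n),
        ξ ^ (ε * ((n : ℤ) ^ 2 - 1) / 4) *
          (((ξ ^ ((r + 1) / 2)) ^ (n : ℤ) - (ξ ^ ((r + 1) / 2)) ^ (-(n : ℤ))) /
            (ξ ^ ((r + 1) / 2) - (ξ ^ ((r + 1) / 2))⁻¹)) ^ 2) ≠ 0 := by
  have : NeZero r := ⟨by omega⟩
  set w := ξ ^ ((r + 1) / 2)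
  have hw2 : w ^ 2 = ξ := pow_succ_div_two_sq hodd hξ.pow_eq_one
  have hw0 : w ≠ 0 := pow_ne_zero _ (hξ.ne_zero (by omega))
  have hD : w - w⁻¹ ≠ 0 := sub_inv_ne_zero_of_sq_ne_one hw0 (hw2 ▸ hξ.ne_one (by omega))
  set ψ := AddChar.zmodChar r hξ.pow_eq_one
  have hψ : ∀ m : ℤ, ψ m = ξ ^ m := AddChar.zmodChar_intCast r _
  have hεε : (ε : ZMod r) * ε = 1 := by rcases hε with rfl | rfl <;> norm_num
  have hε0 : (ε : ℂ) ≠ 0 := by rcases hε with rfl | rfl <;> norm_num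
  have h2ε : IsUnit (2 * (ε : ZMod r)) :=
    .mul (mod_cast (ZMod.isUnit_iff_coprime 2 r).mpr (Nat.coprime_two_left.mpr hodd))
      (.of_mul_eq_one _ hεε)
  have hγ0 : quadGaussSum ψ (ε : ZMod r) ≠ 0 :=
    quadGaussSum_ne_zero (AddChar.zmodChar_primitive_of_primitive_root r hξ) h2ε
  rw [sum_filter_odd_zpow_mul_quantum_sq ψ hψ hw2 hw0 hεε,
    sum_filter_odd_zpow_eq_quadGaussSum ψ hψ, ← hw2, two_mul_sq_zpow_neg_sub_one hw0 hε]
  exact ⟨by field_simp, by simp [hε0, zpow_ne_zero _ hw0, hD, hγ0]⟩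
end

section
/- Let k be an integer with 0 ≤ k ≤ (r−3)/2. Then Σ^ξ_n ev_ξ( [n+k choose 2k+1] · {k}! · {n} ) = 2 · w^{(k+1)(k+2)/2} · ∏_{i=0}^{r−k−3}(1 − ξ^{k+2+i}), where ev_ξ evaluates the Laurent polynomial [n+k choose 2k+1]{k}!{n} ∈ ℤ[v^{±1}] at v = w. -/
noncomputable section

/-- The index set of the sums `Σ^ξ_n`: odd integers `n` with `0 < n < 2r`. -/
def oddS (r : ℕ) : Finset ℕ := (Finset.range (2 * r)).filter (fun n => Odd n)

/-- The evaluation at `v = w` of `{m} = v^m − v^{−m}`. -/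
def brw (w : ℂ) (m : ℤ) : ℂ := w ^ m - w ^ (-m)

/-- The evaluation at `v = w` of the Laurent polynomial `[n+k choose 2k+1]·{k}!·{n}`,
using `[n+k choose 2k+1]·{k}! = {k}!·(∏_{j=0}^{2k} {n−k+j})/{2k+1}!`. -/
def evBinomTerm (w : ℂ) (k n : ℕ) : ℂ :=
  brw w (n : ℤ) * (∏ i ∈ Finset.Icc 1 k, brw w (i : ℤ)) *
      (∏ j ∈ Finset.range (2 * k + 1), brw w ((n : ℤ) - (k : ℤ) + (j : ℤ))) /
    ∏ i ∈ Finset.Icc 1 (2 * k + 1), brw w (i : ℤ)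

/-! With `ξ = w²`, the pairing `{n+t}{n-t} = ξ^{-n}(ξ^n - ξ^t)(ξ^n - ξ^{-t})` writes each summand as
`{k}!/{2k+1}!` times `ξ^{-n(k+1)} Q(ξ^n)`, where `Q = (X - 1) ∏_{|t| ≤ k} (X - ξ^t)` has degree
`2k + 2 < r`. The summand is `r`-periodic in `n`, and the odd `n < 2r` represent every residue
mod `r` once, so the sum is an average over all `r`-th roots of unity; it extracts `r` times the
coefficient of `X^{k+1}` in `Q`. By the `q`-binomial theorem that coefficient is
`2 (-1)^{k+1} ξ^{-k(k+1)/2}` times the Gaussian binomial `[2k+1 choose k]_ξ`, and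
`∏_{i=1}^{r-1} (1 - ξ^i) = r` turns the result into the stated product. -/

open Finset Polynomial

theorem Nat.succ_choose_two (n : ℕ) : (n + 1).choose 2 = n.choose 2 + n := by
  rw [Nat.choose_succ_succ', Nat.choose_one_right, add_comm]

theorem Nat.add_choose_two (a b : ℕ) : (a + b).choose 2 = a.choose 2 + b.choose 2 + a * b := by
  induction b with
  | zero => simp
  | succ b ih =>
    rw [← add_assoc, Nat.succ_choose_two, ih, Nat.succ_choose_two]
    ring

theorem Nat.succ_mul_self_eq_two_mul_choose_two (n : ℕ) : (n + 1) * n = 2 * (n + 1).choose 2 := by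
  simpa [mul_comm] using Nat.add_one_mul_choose_eq n 1

section QAnalogues

variable {R : Type*} [CommRing R]

/-- The `q`-Pochhammer symbol `(q; q)_m`. -/
def qPochhammer (q : R) (m : ℕ) : R := ∏ i ∈ range m, (1 - q ^ (i + 1))

def qRootProd (c q : R) (m : ℕ) : R[X] := ∏ j ∈ range m, (X - C (c * q ^ j))

@[simp]
theorem qPochhammer_zero (q : R) : qPochhammer q 0 = 1 := prod_range_zero _

theorem qPochhammer_succ (q : R) (m : ℕ) :
    qPochhammer q (m + 1) = qPochhammer q m * (1 - q ^ (m + 1)) :=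
  prod_range_succ _ _

theorem qPochhammer_mul_prod_range (q : R) (m n : ℕ) :
    qPochhammer q m * ∏ i ∈ range n, (1 - q ^ (m + 1 + i)) = qPochhammer q (m + n) := by
  rw [qPochhammer, qPochhammer, prod_range_add]
  simp only [add_right_comm]

theorem qRootProd_succ (c q : R) (m : ℕ) :
    qRootProd c q (m + 1) = qRootProd c q m * (X - C (c * q ^ m)) :=
  prod_range_succ _ _

theorem natDegree_qRootProd_le (c q : R) (m : ℕ) : (qRootProd c q m).natDegree ≤ m := by
  refine (natDegree_prod_le _ _).trans ?_
  simpa using sum_le_sum fun j (_ : j ∈ range m) => natDegree_X_sub_C_le (c * q ^ j)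

theorem natDegree_qRootProd_mul_X_sub_C_le (c q a : R) (m : ℕ) :
    (qRootProd c q m * (X - C a)).natDegree ≤ m + 1 :=
  natDegree_mul_le.trans (add_le_add (natDegree_qRootProd_le c q m) (natDegree_X_sub_C_le a))

/-- The `q`-binomial theorem, multiplied out so that no division occurs. -/
theorem coeff_qRootProd_mul_qPochhammer (c q : R) {m i j : ℕ} (h : i + j = m) :
    (qRootProd c q m).coeff i * (qPochhammer q i * qPochhammer q j) =
      (-c) ^ j * q ^ j.choose 2 * qPochhammer q m := by
  induction m generalizing i j with
  | zero =>
    obtain ⟨rfl, rfl⟩ : i = 0 ∧ j = 0 := by omega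
    simp [qRootProd]
  | succ m ih =>
    rw [qRootProd_succ, qPochhammer_succ]
    rcases i with _ | i
    · obtain rfl : j = m + 1 := by omega
      have ih₀ := ih (i := 0) (j := m) (by omega)
      rw [qPochhammer_zero, one_mul] at ih₀ ⊢
      rw [mul_coeff_zero, Nat.succ_choose_two]
      simp only [coeff_sub, coeff_X_zero, coeff_C_zero, qPochhammer_succ]
      linear_combination (-(c * q ^ m) * (1 - q ^ (m + 1))) * ih₀
    rcases j with _ | j
    · obtain rfl : i = m := by omega
      have ih₀ := ih (i := i) (j := 0) (by omega)
      have hlead : (qRootProd c q i).coeff (i + 1) = 0 :=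
        coeff_eq_zero_of_natDegree_lt ((natDegree_qRootProd_le c q i).trans_lt i.lt_succ_self)
      rw [coeff_mul_X_sub_C, hlead, qPochhammer_succ]
      linear_combination (1 - q ^ (i + 1)) * ih₀
    · obtain rfl : m = i + j + 1 := by omega
      have ih₁ := ih (i := i) (j := j + 1) (by omega)
      have ih₂ := ih (i := i + 1) (j := j) (by omega)
      rw [qPochhammer_succ, Nat.succ_choose_two] at ih₁
      rw [qPochhammer_succ] at ih₂
      rw [coeff_mul_X_sub_C, qPochhammer_succ, qPochhammer_succ, Nat.succ_choose_two]
      linear_combination (1 - q ^ (i + 1)) * ih₁ - c * q ^ (i + j + 1) * (1 - q ^ (j + 1)) * ih₂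

theorem coeff_qRootProd_sub_coeff_mul {K : Type*} [Field K] {q : K} (hq : q ≠ 0) (k : ℕ) :
    ((qRootProd (q ^ k)⁻¹ q (2 * k + 1)).coeff k -
        (qRootProd (q ^ k)⁻¹ q (2 * k + 1)).coeff (k + 1)) *
        (qPochhammer q k * qPochhammer q (k + 1)) =
      2 * (-1) ^ (k + 1) * (q ^ (k + 1).choose 2)⁻¹ * qPochhammer q (2 * k + 1) := by
  have h₀ := coeff_qRootProd_mul_qPochhammer (q ^ k)⁻¹ q (m := 2 * k + 1) (i := k) (j := k + 1)
    (by omega)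
  have h₁ := coeff_qRootProd_mul_qPochhammer (q ^ k)⁻¹ q (m := 2 * k + 1) (i := k + 1) (j := k)
    (by omega)
  have hT := Nat.succ_mul_self_eq_two_mul_choose_two k
  have hsq : k * k = (k + 1).choose 2 + k.choose 2 := by
    rw [Nat.succ_choose_two] at hT ⊢
    linarith
  have hc₀ : (-(q ^ k)⁻¹) ^ (k + 1) * q ^ (k + 1).choose 2 =
      (-1) ^ (k + 1) * (q ^ (k + 1).choose 2)⁻¹ := by
    rw [neg_pow, inv_pow, ← pow_mul, mul_comm k, hT, pow_mul']
    field_simp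
  have hc₁ : (-(q ^ k)⁻¹) ^ k * q ^ k.choose 2 = (-1) ^ k * (q ^ (k + 1).choose 2)⁻¹ := by
    rw [neg_pow, inv_pow, ← pow_mul, hsq, pow_add]
    field_simp
  rw [hc₀] at h₀
  rw [hc₁] at h₁
  linear_combination h₀ - h₁

end QAnalogues

namespace IsPrimitiveRoot

variable {K : Type*} [Field K] {ζ : K} {r : ℕ}

theorem sum_pow_mul_inv_pow (hζ : IsPrimitiveRoot ζ r) {i a : ℕ} (hi : i < r) (ha : a < r) :
    ∑ n ∈ range r, (ζ ^ i * (ζ ^ a)⁻¹) ^ n = if i = a then (r : K) else 0 := by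
  have hζa : ζ ^ a ≠ 0 := pow_ne_zero a (hζ.ne_zero (by omega))
  split_ifs with hia
  · simp [hia, mul_inv_cancel₀ hζa]
  · have hu : ζ ^ i * (ζ ^ a)⁻¹ ≠ 1 := fun h =>
      hia (hζ.pow_inj hi ha ((mul_inv_eq_one₀ hζa).mp h))
    have hur : (ζ ^ i * (ζ ^ a)⁻¹) ^ r = 1 := by
      rw [mul_pow, inv_pow, ← pow_mul, ← pow_mul, mul_comm i, mul_comm a, pow_mul, pow_mul,
        hζ.pow_eq_one, one_pow, one_pow, inv_one, mul_one]
    rw [geom_sum_eq hu, hur, sub_self, zero_div]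

theorem sum_inv_pow_mul_eval (hζ : IsPrimitiveRoot ζ r) {p : K[X]} (hp : p.natDegree < r)
    {a : ℕ} (ha : a < r) :
    ∑ n ∈ range r, ((ζ ^ n)⁻¹) ^ a * p.eval (ζ ^ n) = r * p.coeff a := by
  have hterm (n i : ℕ) : ((ζ ^ n)⁻¹) ^ a * (p.coeff i * (ζ ^ n) ^ i) =
      p.coeff i * (ζ ^ i * (ζ ^ a)⁻¹) ^ n := by
    ring
  simp_rw [eval_eq_sum_range' hp, mul_sum, hterm]
  rw [sum_comm]
  simp_rw [← mul_sum]
  rw [sum_congr rfl fun i hi => by rw [hζ.sum_pow_mul_inv_pow (mem_range.mp hi) ha]]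
  simp [ha, mul_comm]

theorem qPochhammer_ne_zero (hζ : IsPrimitiveRoot ζ r) {m : ℕ} (hm : m < r) :
    qPochhammer ζ m ≠ 0 :=
  prod_ne_zero_iff.mpr fun i hi =>
    sub_ne_zero.mpr (hζ.pow_ne_one_of_pos_of_lt i.succ_ne_zero (by simp at hi; omega)).symm

theorem qPochhammer_pred (hζ : IsPrimitiveRoot ζ r) (hr : r ≠ 0) :
    qPochhammer ζ (r - 1) = r := by
  obtain ⟨s, rfl⟩ := Nat.exists_eq_succ_of_ne_zero hr
  simpa [qPochhammer] using hζ.prod_one_sub_pow_eq_order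

end IsPrimitiveRoot

theorem prod_range_centered {M : Type*} [CommMonoid M] (F : ℤ → M) (a : ℤ) (k : ℕ) :
    ∏ j ∈ range (2 * k + 1), F (a - k + j) = F a * ∏ t ∈ Icc 1 k, (F (a + t) * F (a - t)) := by
  induction k with
  | zero => simp
  | succ k ih =>
    have hshift (j : ℕ) : F (a - ↑(k + 1) + ↑(j + 1)) = F (a - k + j) := by
      push_cast; ring_nf
    rw [show 2 * (k + 1) + 1 = 2 * k + 1 + 1 + 1 by ring, prod_range_succ, prod_range_succ',
      prod_Icc_succ_top (by omega)]
    simp only [hshift, ih, Nat.cast_zero, add_zero]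
    rw [show a - k + ↑(2 * k + 1) = a + ↑(k + 1) by push_cast; ring]
    ac_rfl

theorem sum_oddS_eq_sum_range {M : Type*} [AddCommMonoid M] {r : ℕ} (hr : Odd r) {f : ℕ → M}
    (hf : Function.Periodic f r) : ∑ n ∈ oddS r, f n = ∑ n ∈ range r, f n := by
  rw [oddS, sum_filter, two_mul, sum_range_add, ← sum_add_distrib]
  refine sum_congr rfl fun n _ => ?_
  rw [add_comm r n, hf]
  by_cases hn : Odd n <;> simp [hn, Nat.odd_add, Nat.not_even_iff_odd.mpr hr]

section Brw

variable {w ξ : ℂ}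

theorem brw_periodic {r : ℕ} (hwr : w ^ r = 1) : Function.Periodic (brw w) r := fun m => by
  rcases eq_or_ne r 0 with rfl | hr
  · simp
  have hw : w ≠ 0 := ne_zero_pow hr (by simp [hwr])
  simp only [brw, neg_add, zpow_add₀ hw, zpow_neg, zpow_natCast, hwr, inv_one, mul_one]

theorem evBinomTerm_periodic {r : ℕ} (hwr : w ^ r = 1) (k : ℕ) :
    Function.Periodic (evBinomTerm w k) r := fun n => by
  have hper := brw_periodic hwr
  simp only [evBinomTerm, Nat.cast_add, hper _]
  congr 2
  refine prod_congr rfl fun j _ => ?_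
  rw [show (n : ℤ) + r - k + j = n - k + j + r by ring, hper]

theorem brw_add_mul_brw_sub (hw : w ≠ 0) (hwξ : w ^ 2 = ξ) (a t : ℤ) :
    brw w (a + t) * brw w (a - t) = ξ ^ (-a) * (ξ ^ a - ξ ^ t) * (ξ ^ a - ξ ^ (-t)) := by
  subst hwξ
  have hsq (m : ℤ) : (w ^ 2) ^ m = (w ^ m) ^ 2 := by
    rw [← zpow_natCast, ← zpow_natCast, ← zpow_mul, ← zpow_mul, mul_comm]
  have ha := zpow_ne_zero a hw
  have ht := zpow_ne_zero t hw
  simp only [brw, hsq, zpow_add₀ hw, zpow_sub₀ hw, zpow_neg, neg_add_rev, neg_sub]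
  field_simp

theorem brw_mul_prod_brw_centered (hw : w ≠ 0) (hwξ : w ^ 2 = ξ) (a : ℤ) (k : ℕ) :
    brw w a * ∏ j ∈ range (2 * k + 1), brw w (a - k + j) =
      (ξ ^ (-a)) ^ (k + 1) *
        ((∏ j ∈ range (2 * k + 1), (ξ ^ a - (ξ ^ k)⁻¹ * ξ ^ j)) * (ξ ^ a - 1)) := by
  have hξ : ξ ≠ 0 := hwξ ▸ pow_ne_zero 2 hw
  have hroots (j : ℕ) : (ξ ^ k)⁻¹ * ξ ^ j = ξ ^ (-(k : ℤ) + j) := by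
    rw [zpow_add₀ hξ, zpow_neg, zpow_natCast, zpow_natCast]
  have hcentered := prod_range_centered (fun m => ξ ^ a - ξ ^ m) 0 k
  have hsquare := brw_add_mul_brw_sub hw hwξ a 0
  simp only [zero_add, zero_sub, add_zero, sub_zero, neg_zero, zpow_zero, prod_mul_distrib]
    at hcentered hsquare
  simp only [hroots, hcentered, prod_range_centered (brw w), brw_add_mul_brw_sub hw hwξ a,
    prod_mul_distrib, prod_const, Nat.card_Icc, Nat.add_sub_cancel]
  linear_combination (ξ ^ (-a)) ^ k * (∏ t ∈ Icc 1 k, (ξ ^ a - ξ ^ (t : ℤ))) *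
    (∏ t ∈ Icc 1 k, (ξ ^ a - ξ ^ (-(t : ℤ)))) * hsquare

theorem brw_natCast (hw : w ≠ 0) (i : ℕ) : brw w i = -(w ^ i)⁻¹ * (1 - (w ^ 2) ^ i) := by
  rw [brw, zpow_neg, zpow_natCast]
  field_simp
  ring

theorem prod_Icc_brw (hw : w ≠ 0) (m : ℕ) :
    ∏ i ∈ Icc 1 m, brw w i = (-1) ^ m * (w ^ (m + 1).choose 2)⁻¹ * qPochhammer (w ^ 2) m := by
  induction m with
  | zero => simp
  | succ m ih =>
    rw [prod_Icc_succ_top (by omega), ih, brw_natCast hw, qPochhammer_succ,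
      Nat.succ_choose_two (m + 1), pow_add, mul_inv]
    ring

theorem evBinomTerm_eq (hw : w ≠ 0) (hwξ : w ^ 2 = ξ) (k n : ℕ) :
    evBinomTerm w k n = (∏ i ∈ Icc 1 k, brw w i) / (∏ i ∈ Icc 1 (2 * k + 1), brw w i) *
      (((ξ ^ n)⁻¹) ^ (k + 1) * (qRootProd (ξ ^ k)⁻¹ ξ (2 * k + 1) * (X - C 1)).eval (ξ ^ n)) := by
  rw [evBinomTerm, mul_right_comm, brw_mul_prod_brw_centered hw hwξ]
  simp only [qRootProd, eval_mul, eval_prod, eval_sub, eval_X, eval_C, zpow_neg, zpow_natCast]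
  ring

theorem sum_range_evBinomTerm_mul_qPochhammer {r k : ℕ} (hξ : IsPrimitiveRoot ξ r)
    (hwξ : w ^ 2 = ξ) (hk : 2 * k + 3 ≤ r) :
    (∑ n ∈ range r, evBinomTerm w k n) * qPochhammer ξ (k + 1) = 2 * r * w ^ (k + 2).choose 2 := by
  have hξ₀ : ξ ≠ 0 := hξ.ne_zero (by omega)
  have hw : w ≠ 0 := ne_zero_pow two_ne_zero (hwξ ▸ hξ₀)
  simp_rw [evBinomTerm_eq hw hwξ]
  rw [← mul_sum, hξ.sum_inv_pow_mul_eval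
      ((natDegree_qRootProd_mul_X_sub_C_le _ _ _ _).trans_lt (by omega)) (by omega),
    coeff_mul_X_sub_C, mul_one, prod_Icc_brw hw, prod_Icc_brw hw, hwξ]
  have hcoeff := coeff_qRootProd_sub_coeff_mul hξ₀ k
  have hA := hξ.qPochhammer_ne_zero (m := 2 * k + 1) (by omega)
  have hD : (2 * k + 1 + 1).choose 2 = (k + 2).choose 2 + 3 * (k + 1).choose 2 := by
    have hT := Nat.succ_mul_self_eq_two_mul_choose_two k
    rw [show 2 * k + 1 + 1 = (k + 1) + (k + 1) by ring, Nat.add_choose_two,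
      show k + 2 = k + 1 + 1 from rfl, Nat.succ_choose_two (k + 1)]
    nlinarith
  subst hwξ
  -- hides the coefficients from `field_simp`, which would otherwise rewrite the inverse inside
  set G := qRootProd ((w ^ 2) ^ k)⁻¹ (w ^ 2) (2 * k + 1)
  rw [hD]
  field_simp at hcoeff ⊢
  linear_combination (-1) ^ k * w ^ ((k + 2).choose 2 + (k + 1).choose 2) * r * hcoeff

end Brw

/-- Let `r ≥ 3` be odd, `ξ` a primitive `r`-th root of unity,
`w = ξ^{(r+1)/2}`, and `0 ≤ k ≤ (r−3)/2`.  Then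
`Σ^ξ_n ev_ξ([n+k choose 2k+1]{k}!{n}) = 2·w^{(k+1)(k+2)/2}·∏_{i=0}^{r−k−3}(1 − ξ^{k+2+i})`. -/
theorem laplace_transform_zero_framing (r : ℕ) (hr : 3 ≤ r) (hodd : Odd r) (ξ : ℂ)
    (hξ : IsPrimitiveRoot ξ r) (k : ℕ) (hk : k ≤ (r - 3) / 2) :
    ∑ n ∈ oddS r, evBinomTerm (ξ ^ ((r + 1) / 2)) k n =
      2 * (ξ ^ ((r + 1) / 2)) ^ (((k + 1) * (k + 2)) / 2) *
        ∏ i ∈ Finset.range (r - k - 2), (1 - ξ ^ (k + 2 + i)) := by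
  have hr_mod_two := Nat.odd_iff.mp hodd
  set w := ξ ^ ((r + 1) / 2)
  have hwξ : w ^ 2 = ξ := by
    rw [← pow_mul, show (r + 1) / 2 * 2 = r + 1 by omega, pow_succ, hξ.pow_eq_one, one_mul]
  have hwr : w ^ r = 1 := by rw [← pow_mul, mul_comm, pow_mul, hξ.pow_eq_one, one_pow]
  have hchoose : (k + 2).choose 2 = (k + 1) * (k + 2) / 2 := by
    rw [Nat.choose_two_right, mul_comm]; rfl
  rw [sum_oddS_eq_sum_range hodd (evBinomTerm_periodic hwr k)]
  refine mul_right_cancel₀ (hξ.qPochhammer_ne_zero (m := k + 1) (by omega)) ?_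
  rw [sum_range_evBinomTerm_mul_qPochhammer hξ hwξ (by omega), mul_right_comm,
    mul_assoc _ (∏ i ∈ _, _), mul_comm (∏ i ∈ _, _), qPochhammer_mul_prod_range,
    show k + 1 + (r - k - 2) = r - 1 by omega, hξ.qPochhammer_pred (by omega), hchoose]

end
end

section
/- Let d be a nonzero integer coprime to r, let b be an integer with db ≡ 1 (mod r), and let k be an integer with 0 ≤ k ≤ (r−3)/2. Then Σ^ξ_n ξ^{d(n^2−1)/4} · ev_ξ( [n+k choose 2k+1] · {k}! · {n} ) = −2 · γ_d(ξ) · Ỹ(k,−b)(w) · ∏_{i=1}^{k}(w^i − w^{−i}) / ∏_{i=1}^{2k+1}(w^i − w^{−i}), where Ỹ(k,−b)(w) is the evaluation of Ỹ(k,−b) at v = w, ev_ξ evaluates Laurent polynomials at v = w, and the denominator is nonzero since 2k+1 ≤ r−2. -/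
noncomputable section

/-- The evaluation at `v = w` of the balanced Gaussian binomial `[n choose j]`
(for `j ≤ n ≤ r − 2`, where no denominator vanishes). -/
def evQbin (w : ℂ) (n j : ℕ) : ℂ :=
  (∏ i ∈ Finset.Icc 1 n, brw w (i : ℤ)) /
    ((∏ i ∈ Finset.Icc 1 j, brw w (i : ℤ)) * ∏ i ∈ Finset.Icc 1 (n - j), brw w (i : ℤ))

/-- The evaluation at `v = w` of `Ỹ(k,b) = Σ_{j=0}^{2k+1} (−1)^j [2k+1 choose j] q^{b(j−k)²}`,
with `q = w²`. -/
def Ytw (w : ℂ) (k : ℕ) (b : ℤ) : ℂ :=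
  ∑ j ∈ Finset.range (2 * k + 2),
    (-1) ^ j * evQbin w (2 * k + 1) j * (w ^ 2) ^ (b * ((j : ℤ) - (k : ℤ)) ^ 2)

lemma lc_aux (w w1 A A1 M M1 : ℂ) (hA : A*A1=1) (hM : M*M1=1) :
    (M*w1 - w*M1)*(M - M1) =
      (A*w1 - w*A1)*(A - A1) + (M*A1*w1 - A*w*M1)*(M*A1 - A*M1)
        + (M*w1 + w*M1)*(A - A1)*(M*A1 - A*M1) := by
  linear_combination (w1 - w1*M^2 + w - w*M1^2) * hA + (-w1 + w1*A^2 - w + w*A1^2) * hM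

lemma brw_pascal (w : ℂ) (hw : w ≠ 0) (a m : ℤ) :
    brw w (m-1) * brw w m =
      brw w (a-1) * brw w a + brw w (m-a-1) * brw w (m-a)
        + (w^(m-1) + w^(1-m)) * brw w a * brw w (m-a) := by
  have hA : w ^ a * (w ^ a)⁻¹ = 1 := mul_inv_cancel₀ (zpow_ne_zero _ hw)
  have hM : w ^ m * (w ^ m)⁻¹ = 1 := mul_inv_cancel₀ (zpow_ne_zero _ hw)
  have h1 : brw w (m-1) = w^m*w⁻¹ - w*(w^m)⁻¹ := by
    simp only [brw, show -(m-1) = 1-m by ring, zpow_sub₀ hw, zpow_one, div_eq_mul_inv]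
  have h2 : brw w m = w^m - (w^m)⁻¹ := by simp only [brw, zpow_neg]
  have h3 : brw w (a-1) = w^a*w⁻¹ - w*(w^a)⁻¹ := by
    simp only [brw, show -(a-1) = 1-a by ring, zpow_sub₀ hw, zpow_one, div_eq_mul_inv]
  have h4 : brw w a = w^a - (w^a)⁻¹ := by simp only [brw, zpow_neg]
  have h5 : brw w (m-a-1) = w^m*(w^a)⁻¹*w⁻¹ - w^a*w*(w^m)⁻¹ := by
    simp only [brw, show -(m-a-1) = a+1-m by ring, zpow_sub₀ hw, zpow_add₀ hw, zpow_one,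
      div_eq_mul_inv]
  have h6 : brw w (m-a) = w^m*(w^a)⁻¹ - w^a*(w^m)⁻¹ := by
    simp only [brw, show -(m-a) = a-m by ring, zpow_sub₀ hw, div_eq_mul_inv]
  have h7 : w^(m-1) = w^m*w⁻¹ := by
    simp only [zpow_sub₀ hw, zpow_one, div_eq_mul_inv]
  have h8 : w^(1-m) = w*(w^m)⁻¹ := by
    simp only [zpow_sub₀ hw, zpow_one, div_eq_mul_inv]
  rw [h1, h2, h3, h4, h5, h6, h7, h8]
  exact lc_aux w w⁻¹ (w^a) (w^a)⁻¹ (w^m) (w^m)⁻¹ hA hM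

lemma brw_top (w : ℂ) (hw : w ≠ 0) (m : ℤ) :
    brw w m = brw w (m-2) + (w^(m-1) + w^(1-m)) * brw w 1 := by
  have hw' : w * w⁻¹ = 1 := mul_inv_cancel₀ hw
  have h1 : brw w (m-2) = w^m*w⁻¹*w⁻¹ - w*w*(w^m)⁻¹ := by
    simp only [brw, show (m-2:ℤ) = m-1-1 by ring, show -(m-1-1) = 1+1-m by ring,
      zpow_sub₀ hw, zpow_add₀ hw, zpow_one, div_eq_mul_inv]
  have h2 : brw w m = w^m - (w^m)⁻¹ := by simp only [brw, zpow_neg]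
  have h9 : brw w 1 = w - w⁻¹ := by simp only [brw, zpow_neg, zpow_one]
  have h7 : w^(m-1) = w^m*w⁻¹ := by
    simp only [zpow_sub₀ hw, zpow_one, div_eq_mul_inv]
  have h8 : w^(1-m) = w*(w^m)⁻¹ := by
    simp only [zpow_sub₀ hw, zpow_one, div_eq_mul_inv]
  rw [h1, h2, h9, h7, h8]
  linear_combination (-(w^m - (w^m)⁻¹)) * hw'

lemma zpow_congr (r : ℕ) (ξ : ℂ) (hξ0 : ξ ≠ 0) (hξ1 : ξ ^ r = 1)
    {m m' : ℤ} (h : m ≡ m' [ZMOD (r:ℤ)]) : ξ ^ m = ξ ^ m' := by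
  obtain ⟨s, hs⟩ := Int.ModEq.dvd h
  have : m' = m + (r:ℤ) * s := by linarith
  rw [this, zpow_add₀ hξ0, zpow_mul, zpow_natCast, hξ1, one_zpow, mul_one]

lemma sum_oddS_eq (r : ℕ) (hr : 0 < r) (hodd : Odd r) (F : ℤ → ℂ)
    (hF : ∀ m m' : ℤ, m ≡ m' [ZMOD (r:ℤ)] → F m = F m') :
    ∑ n ∈ oddS r, F (n:ℤ) = ∑ m ∈ Finset.range r, F (m:ℤ) := by
  apply Finset.sum_nbij' (fun n => n % r) (fun m => if Odd m then m else m + r)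
  · intro n hn
    exact Finset.mem_range.mpr (Nat.mod_lt _ hr)
  · intro m hm
    simp only [oddS, Finset.mem_filter, Finset.mem_range] at *
    by_cases h : Odd m
    · simp [h]; omega
    · simp [h]
      constructor
      · omega
      · rcases hodd with ⟨t, ht⟩
        rcases Nat.not_odd_iff_even.mp h with ⟨s, hs⟩
        exact ⟨s + t, by omega⟩
  · intro n hn
    simp only [oddS, Finset.mem_filter, Finset.mem_range] at hn
    obtain ⟨hn2, hn1⟩ := hn
    by_cases h : n < r
    · rw [Nat.mod_eq_of_lt h, if_pos hn1]
    · have hge : r ≤ n := le_of_not_gt h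
      have hmod : n % r = n - r := by
        rw [Nat.mod_eq_sub_mod hge, Nat.mod_eq_of_lt (by omega)]
      rw [hmod]
      have hev : ¬ Odd (n - r) := by
        rcases hn1 with ⟨t, ht⟩; rcases hodd with ⟨s, hs⟩
        intro ⟨u, hu⟩; omega
      rw [if_neg hev]; omega
  · intro m hm
    simp only [Finset.mem_range] at hm
    by_cases h : Odd m
    · rw [if_pos h, Nat.mod_eq_of_lt hm]
    · rw [if_neg h, Nat.add_mod_right, Nat.mod_eq_of_lt hm]
  · intro n hn
    apply hF
    have : ((n % r : ℕ) : ℤ) = (n : ℤ) % (r : ℤ) := by push_cast; ring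
    show (n:ℤ) % r = _ % r
    rw [this, Int.emod_emod_of_dvd _ dvd_rfl]

lemma sum_range_shift (r : ℕ) (hr : 0 < r) (F : ℤ → ℂ)
    (hF : ∀ m m' : ℤ, m ≡ m' [ZMOD (r:ℤ)] → F m = F m') (a : ℤ) :
    ∑ m ∈ Finset.range r, F ((m:ℤ) + a) = ∑ m ∈ Finset.range r, F (m:ℤ) := by
  have hr' : (0:ℤ) < r := by exact_mod_cast hr
  apply Finset.sum_nbij' (fun m : ℕ => (((m:ℤ) + a) % r).toNat)
    (fun m : ℕ => (((m:ℤ) - a) % r).toNat)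
  · intro m hm
    have h1 := Int.emod_nonneg ((m:ℤ) + a) (by omega : (r:ℤ) ≠ 0)
    have h2 := Int.emod_lt_of_pos ((m:ℤ) + a) hr'
    exact Finset.mem_range.mpr (by omega)
  · intro m hm
    have h1 := Int.emod_nonneg ((m:ℤ) - a) (by omega : (r:ℤ) ≠ 0)
    have h2 := Int.emod_lt_of_pos ((m:ℤ) - a) hr'
    simp only [oddS, Finset.mem_filter, Finset.mem_range] at *
    omega
  · intro m hm
    simp only [Finset.mem_range] at hm
    have h1 := Int.emod_nonneg ((m:ℤ) + a) (by omega : (r:ℤ) ≠ 0)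
    have h2 : ((((m:ℤ) + a) % r).toNat : ℤ) = ((m:ℤ) + a) % r := Int.toNat_of_nonneg h1
    have h3 : ((((m:ℤ) + a) % r) - a) % r = (m:ℤ) % r := by
      conv_rhs => rw [show (m:ℤ) = ((m:ℤ) + a) - a by ring]
      exact Int.ModEq.sub_right a (Int.emod_emod_of_dvd _ dvd_rfl)
    have h4 : (m:ℤ) % r = m := Int.emod_eq_of_lt (by omega) (by exact_mod_cast hm)
    have := h3.trans h4
    rw [h2] at *
    omega
  · intro m hm
    simp only [Finset.mem_range] at hm
    have h1 := Int.emod_nonneg ((m:ℤ) - a) (by omega : (r:ℤ) ≠ 0)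
    have h2 : ((((m:ℤ) - a) % r).toNat : ℤ) = ((m:ℤ) - a) % r := Int.toNat_of_nonneg h1
    have h3 : ((((m:ℤ) - a) % r) + a) % r = (m:ℤ) % r := by
      conv_rhs => rw [show (m:ℤ) = ((m:ℤ) - a) + a by ring]
      exact Int.ModEq.add_right a (Int.emod_emod_of_dvd _ dvd_rfl)
    have h4 : (m:ℤ) % r = m := Int.emod_eq_of_lt (by omega) (by exact_mod_cast hm)
    have := h3.trans h4
    rw [h2] at *
    omega
  · intro m hm
    apply hF
    have h1 := Int.emod_nonneg ((m:ℤ) + a) (by omega : (r:ℤ) ≠ 0)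
    have h2 : ((((m:ℤ) + a) % r).toNat : ℤ) = ((m:ℤ) + a) % r := Int.toNat_of_nonneg h1
    rw [h2]
    exact (Int.emod_emod_of_dvd _ dvd_rfl).symm

lemma laplace (r : ℕ) (hr : 3 ≤ r) (hodd : Odd r) (ξ : ℂ) (hξ0 : ξ ≠ 0)
    (hξ1 : ξ ^ r = 1) (d b : ℤ) (hb : d * b ≡ 1 [ZMOD (r:ℤ)]) (c : ℤ) :
    ∑ n ∈ oddS r, ξ ^ (d * ((n:ℤ)^2 - 1) / 4) * ξ ^ (c * (n:ℤ)) =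
      (∑ n ∈ oddS r, ξ ^ (d * ((n:ℤ)^2 - 1) / 4)) * ξ ^ (-b * c^2) := by
  have hr0 : 0 < r := by omega
  -- the half-integer
  set i2 : ℤ := (((r+1)/2 : ℕ) : ℤ) with hi2def
  have h2i : 2 * i2 = (r:ℤ) + 1 := by
    rcases hodd with ⟨s, hs⟩
    rw [hi2def]
    have : (r+1)/2 = s + 1 := by omega
    rw [this]; push_cast; omega
  obtain ⟨u, hu⟩ : ∃ u : ℤ, d * b = 1 + (r:ℤ) * u := by
    obtain ⟨v, hv⟩ := Int.ModEq.dvd hb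
    exact ⟨-v, by linarith⟩
  have key : 4*i2^2*d*b - 1 = (r:ℤ) * (((r:ℤ)+2)*(1+(r:ℤ)*u) + u) := by
    linear_combination ((2*i2 + (r:ℤ) + 1)*(d*b)) * h2i + (((r:ℤ)+1)^2) * hu
  set i4 : ℤ := i2^2 with hi4def
  set F : ℤ → ℂ := fun m => ξ ^ (i4 * (d * (m^2 - 1)) + c * m) with hFdef
  set G : ℤ → ℂ := fun m => ξ ^ (i4 * (d * (m^2 - 1))) with hGdef
  have hFcong : ∀ m m' : ℤ, m ≡ m' [ZMOD (r:ℤ)] → F m = F m' := by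
    intro m m' h
    apply zpow_congr r ξ hξ0 hξ1
    exact (((((h.pow 2).sub_right 1).mul_left d).mul_left i4).add (h.mul_left c))
  have hGcong : ∀ m m' : ℤ, m ≡ m' [ZMOD (r:ℤ)] → G m = G m' := by
    intro m m' h
    apply zpow_congr r ξ hξ0 hξ1
    exact ((((h.pow 2).sub_right 1).mul_left d).mul_left i4)
  have h4one : 4*i2^2 = (r:ℤ)*((r:ℤ)+2) + 1 := by
    linear_combination (2*i2 + (r:ℤ) + 1) * h2i
  -- exact-division congruence for odd n
  have hdiv : ∀ n ∈ oddS r,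
      (d * ((n:ℤ)^2 - 1) / 4) ≡ i4 * (d * ((n:ℤ)^2 - 1)) [ZMOD (r:ℤ)] := by
    intro n hn
    simp only [oddS, Finset.mem_filter, Finset.mem_range] at hn
    obtain ⟨t, ht⟩ := hn.2
    have hnz : ((n:ℤ)^2 - 1) = 4 * ((t:ℤ)^2 + t) := by
      have h : (n:ℤ) = 2*(t:ℤ) + 1 := by exact_mod_cast ht
      rw [h]; ring
    have he4 : d * ((n:ℤ)^2 - 1) / 4 = d * ((t:ℤ)^2 + t) := by
      rw [hnz, show d * (4 * ((t:ℤ)^2 + t)) = 4 * (d * ((t:ℤ)^2+t)) by ring,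
        Int.mul_ediv_cancel_left _ (by norm_num)]
    rw [he4]
    apply Int.modEq_iff_dvd.mpr
    refine ⟨((r:ℤ)+2) * (d * ((t:ℤ)^2+t)), ?_⟩
    rw [hi4def, hnz]
    linear_combination (d * ((t:ℤ)^2+t)) * h4one
  -- summand rewriting
  have hsum1 : ∀ n ∈ oddS r,
      ξ ^ (d * ((n:ℤ)^2 - 1) / 4) * ξ ^ (c * (n:ℤ)) = F n := by
    intro n hn
    rw [← zpow_add₀ hξ0]
    exact zpow_congr r ξ hξ0 hξ1 ((hdiv n hn).add_right (c * (n:ℤ)))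
  have hsum2 : ∀ n ∈ oddS r, ξ ^ (d * ((n:ℤ)^2 - 1) / 4) = G n := by
    intro n hn
    exact zpow_congr r ξ hξ0 hξ1 (hdiv n hn)
  -- the shift identity
  have hshift : ∀ m : ℤ, F (m + (-(2*c*b))) = G m * ξ ^ (-b * c^2) := by
    intro m
    have hcong : (i4 * (d * ((m + (-(2*c*b)))^2 - 1)) + c * (m + (-(2*c*b))))
        ≡ (i4 * (d * (m^2 - 1)) + (-b * c^2)) [ZMOD (r:ℤ)] := by
      apply Int.modEq_iff_dvd.mpr
      refine ⟨(c*m - b*c^2) * ((((r:ℤ)+2)*(1+(r:ℤ)*u) + u)), ?_⟩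
      linear_combination (c*m - b*c^2) * key
    show ξ ^ _ = _
    rw [zpow_congr r ξ hξ0 hξ1 hcong, zpow_add₀ hξ0]
  calc ∑ n ∈ oddS r, ξ ^ (d * ((n:ℤ)^2 - 1) / 4) * ξ ^ (c * (n:ℤ))
      = ∑ n ∈ oddS r, F (n:ℤ) := Finset.sum_congr rfl hsum1
    _ = ∑ m ∈ Finset.range r, F (m:ℤ) := sum_oddS_eq r hr0 hodd F hFcong
    _ = ∑ m ∈ Finset.range r, F ((m:ℤ) + (-(2*c*b))) :=
        (sum_range_shift r hr0 F hFcong (-(2*c*b))).symm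
    _ = ∑ m ∈ Finset.range r, G (m:ℤ) * ξ ^ (-b * c^2) := by
        exact Finset.sum_congr rfl (fun m _ => hshift m)
    _ = (∑ m ∈ Finset.range r, G (m:ℤ)) * ξ ^ (-b * c^2) := by
        rw [Finset.sum_mul]
    _ = (∑ n ∈ oddS r, G (n:ℤ)) * ξ ^ (-b * c^2) := by
        rw [sum_oddS_eq r hr0 hodd G hGcong]
    _ = (∑ n ∈ oddS r, ξ ^ (d * ((n:ℤ)^2 - 1) / 4)) * ξ ^ (-b * c^2) := by
        rw [Finset.sum_congr rfl hsum2]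

def fac (w : ℂ) (m : ℕ) : ℂ := ∏ i ∈ Finset.Icc 1 m, brw w (i : ℤ)

lemma evQbin_eq (w : ℂ) (n j : ℕ) : evQbin w n j = fac w n / (fac w j * fac w (n - j)) := rfl

lemma fac_zero (w : ℂ) : fac w 0 = 1 := by simp [fac]

lemma fac_succ (w : ℂ) (m : ℕ) : fac w (m+1) = fac w m * brw w ((m:ℤ)+1) := by
  rw [fac, fac, Finset.prod_Icc_succ_top (by omega : 1 ≤ m + 1)]
  push_cast
  ring

lemma fac_one (w : ℂ) : fac w 1 = brw w 1 := by
  rw [show (1:ℕ) = 0 + 1 by rfl, fac_succ, fac_zero]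
  norm_num

lemma fac_ne_zero (w : ℂ) (M : ℕ) (hnz : ∀ i : ℕ, 1 ≤ i → i ≤ M → brw w (i:ℤ) ≠ 0)
    (m : ℕ) (hm : m ≤ M) : fac w m ≠ 0 := by
  rw [fac]
  apply Finset.prod_ne_zero_iff.mpr
  intro i hi
  simp only [Finset.mem_Icc] at hi
  exact hnz i hi.1 (le_trans hi.2 hm)

lemma expand (w : ℂ) (hw : w ≠ 0) :
    ∀ (k : ℕ), (∀ i : ℕ, 1 ≤ i → i ≤ 2*k+1 → brw w (i:ℤ) ≠ 0) → ∀ (x : ℂ), x ≠ 0 →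
    ∏ j ∈ Finset.range (2*k+1), (x * w^((j:ℤ) - (k:ℤ)) - x⁻¹ * w^((k:ℤ) - (j:ℤ)))
      = -∑ j ∈ Finset.range (2*k+2),
          (-1)^j * evQbin w (2*k+1) j * x^(2*(j:ℤ) - 2*(k:ℤ) - 1) := by
  intro k
  induction k with
  | zero =>
    intro hnz x hx
    have h1 : brw w 1 ≠ 0 := hnz 1 le_rfl (by norm_num)
    have hfac1 : fac w 1 ≠ 0 := by rw [fac_one]; exact h1
    simp only [Nat.mul_zero, Nat.zero_add, Finset.prod_range_one, Finset.sum_range_succ,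
      Finset.sum_range_one]
    rw [evQbin_eq, evQbin_eq]
    norm_num [fac_zero]
    rw [div_self hfac1]
    ring
  | succ k IH =>
    intro hnz x hx
    have hnzk : ∀ i : ℕ, 1 ≤ i → i ≤ 2*k+1 → brw w (i:ℤ) ≠ 0 :=
      fun i h1 h2 => hnz i h1 (by omega)
    have hfac : ∀ m : ℕ, m ≤ 2*k+3 → fac w m ≠ 0 :=
      fac_ne_zero w (2*k+3) (fun i h1 h2 => hnz i h1 (by omega))
    have hxi : x * x⁻¹ = 1 := mul_inv_cancel₀ hx
    set P : ℂ := w ^ ((k:ℤ)+1) with hPdef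
    have hP : P ≠ 0 := zpow_ne_zero _ hw
    have hPi : P * P⁻¹ = 1 := mul_inv_cancel₀ hP
    set Q : ℂ := w ^ (2*(k:ℤ)+2) with hQdef
    have hQP : Q = P * P := by
      rw [hQdef, hPdef, show 2*(k:ℤ)+2 = ((k:ℤ)+1) + ((k:ℤ)+1) by ring, zpow_add₀ hw]
    have hQ : Q ≠ 0 := by rw [hQP]; exact mul_ne_zero hP hP
    -- split the product
    have hsplit : ∏ j ∈ Finset.range (2*(k+1)+1),
          (x * w^((j:ℤ) - ((k+1:ℕ):ℤ)) - x⁻¹ * w^(((k+1:ℕ):ℤ) - (j:ℤ)))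
        = (∏ j ∈ Finset.range (2*k+1),
            (x * w^((j:ℤ) - (k:ℤ)) - x⁻¹ * w^((k:ℤ) - (j:ℤ))))
          * (x^(2:ℤ) + x^(-2:ℤ) - Q - Q⁻¹) := by
      rw [show 2*(k+1)+1 = (2*k+2)+1 by ring, Finset.prod_range_succ,
        Finset.prod_range_succ']
      have he1 : ∀ j : ℕ, ((j+1:ℕ):ℤ) - ((k+1:ℕ):ℤ) = (j:ℤ) - (k:ℤ) := by
        intro j; push_cast; ring
      have he2 : ∀ j : ℕ, ((k+1:ℕ):ℤ) - ((j+1:ℕ):ℤ) = (k:ℤ) - (j:ℤ) := by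
        intro j; push_cast; ring
      simp only [he1, he2]
      have he3 : ((0:ℕ):ℤ) - ((k+1:ℕ):ℤ) = -((k:ℤ)+1) := by push_cast; ring
      have he4 : ((k+1:ℕ):ℤ) - ((0:ℕ):ℤ) = (k:ℤ)+1 := by push_cast; ring
      have he5 : ((2*k+1:ℕ):ℤ) - (k:ℤ) = (k:ℤ)+1 := by push_cast; ring
      have he6 : (k:ℤ) - ((2*k+1:ℕ):ℤ) = -((k:ℤ)+1) := by push_cast; ring
      rw [he3, he4, he5, he6, zpow_neg, ← hPdef]
      have hx2 : x^(2:ℤ) = x * x := by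
        rw [show (2:ℤ) = 1+1 by norm_num, zpow_add₀ hx, zpow_one]
      have hx2' : x^(-2:ℤ) = x⁻¹ * x⁻¹ := by
        rw [show (-2:ℤ) = -1 + -1 by norm_num, zpow_add₀ hx, zpow_neg, zpow_one]
      rw [hx2, hx2', hQP, mul_assoc]
      congr 1
      rw [mul_inv]
      linear_combination (x*x + x⁻¹*x⁻¹) * hPi - (P*P + P⁻¹*P⁻¹) * hxi
    rw [hsplit, IH hnzk x hx]
    -- now the sum identity
    set δ : ℕ → ℤ := fun i => 2*(i:ℤ) - 2*(k:ℤ) - 3 with hδdef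
    set a : ℕ → ℂ := fun j => (-1)^j * evQbin w (2*k+1) j with hadef
    set Pf : ℕ → ℂ := fun i => if 2 ≤ i then a (i-2) * x^(δ i) else 0 with hPfdef
    set Rf : ℕ → ℂ := fun i => if i ≤ 2*k+1 then a i * x^(δ i) else 0 with hRfdef
    set Tf : ℕ → ℂ := fun i =>
      if 1 ≤ i ∧ i ≤ 2*k+2 then -(Q+Q⁻¹) * a (i-1) * x^(δ i) else 0 with hTfdef
    have hb1 : brw w 1 ≠ 0 := hnz 1 le_rfl (by omega)
    have hb2k2 : brw w (2*(k:ℤ)+2) ≠ 0 := by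
      have h := hnz (2*k+2) (by omega) (by omega)
      have harg : ((2*k+2:ℕ):ℤ) = 2*(k:ℤ)+2 := by push_cast; ring
      rwa [harg] at h
    have hb2k3 : brw w (2*(k:ℤ)+3) ≠ 0 := by
      have h := hnz (2*k+3) (by omega) (by omega)
      have harg : ((2*k+3:ℕ):ℤ) = 2*(k:ℤ)+3 := by push_cast; ring
      rwa [harg] at h
    have hb2k1 : brw w (2*(k:ℤ)+1) ≠ 0 := by
      have h := hnz (2*k+1) (by omega) (by omega)
      have harg : ((2*k+1:ℕ):ℤ) = 2*(k:ℤ)+1 := by push_cast; ring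
      rwa [harg] at h
    have hf3 : fac w (2*k+3) = fac w (2*k+2) * brw w (2*(k:ℤ)+3) := by
      rw [show 2*k+3 = (2*k+2)+1 by ring, fac_succ]
      congr 2 <;> push_cast <;> ring
    have hf2 : fac w (2*k+2) = fac w (2*k+1) * brw w (2*(k:ℤ)+2) := by
      rw [show 2*k+2 = (2*k+1)+1 by ring, fac_succ]
      congr 2 <;> push_cast <;> ring
    have hf1 : fac w (2*k+1) = fac w (2*k) * brw w (2*(k:ℤ)+1) := by
      rw [show 2*k+1 = (2*k)+1 by ring, fac_succ]
      congr 2 <;> push_cast <;> ring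
    have htop := brw_top w hw (2*(k:ℤ)+3)
    rw [show 2*(k:ℤ)+3-2 = 2*(k:ℤ)+1 by ring, show 2*(k:ℤ)+3-1 = 2*(k:ℤ)+2 by ring,
      show 1-(2*(k:ℤ)+3) = -(2*(k:ℤ)+2) by ring, zpow_neg, ← hQdef] at htop
    have hterm : ∀ i ∈ Finset.range (2*k+4),
        (-1)^i * evQbin w (2*k+3) i * x^(δ i) = Pf i + Rf i + Tf i := by
      intro i hi
      simp only [Finset.mem_range] at hi
      rcases Nat.lt_or_ge i 2 with h2 | h2
      · interval_cases i
        · -- i = 0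
          simp only [hPfdef, hRfdef, hTfdef, hadef]
          rw [if_neg (by omega), if_pos (by omega), if_neg (by omega)]
          rw [evQbin_eq, evQbin_eq, fac_zero, Nat.sub_zero, Nat.sub_zero]
          simp only [one_mul]
          rw [div_self (hfac (2*k+3) le_rfl), div_self (hfac (2*k+1) (by omega))]
          ring
        · -- i = 1
          have hC3 : evQbin w (2*k+3) 1 = brw w (2*(k:ℤ)+3) / brw w 1 := by
            rw [evQbin_eq, show 2*k+3-1 = 2*k+2 by omega, hf3, fac_one,
              mul_comm (brw w 1) (fac w (2*k+2)),
              mul_div_mul_left _ _ (hfac (2*k+2) (by omega))]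
          have hC1 : evQbin w (2*k+1) 1 = brw w (2*(k:ℤ)+1) / brw w 1 := by
            rw [evQbin_eq, show 2*k+1-1 = 2*k by omega, hf1, fac_one,
              mul_comm (brw w 1) (fac w (2*k)),
              mul_div_mul_left _ _ (hfac (2*k) (by omega))]
          simp only [hPfdef, hRfdef, hTfdef, hadef]
          rw [if_neg (by omega), if_pos (by omega), if_pos (by omega)]
          rw [show (1:ℕ)-1 = 0 by omega, hC3, hC1, evQbin_eq, Nat.sub_zero, fac_zero,
            one_mul, div_self (hfac (2*k+1) (by omega)), htop]
          field_simp
          ring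
      · have hf21 : fac w (2*k+1) ≠ 0 := hfac _ (by omega)
        rcases Nat.lt_or_ge i (2*k+2) with h3 | h3
        · -- generic 2 ≤ i ≤ 2k+1
          obtain ⟨c, rfl⟩ : ∃ c, i = c + 2 := ⟨i - 2, by omega⟩
          obtain ⟨e, he⟩ : ∃ e, 2*k+1 = (c+2) + e := ⟨2*k+1-(c+2), by omega⟩
          have heZ : 2*(k:ℤ)+1 = (c:ℤ)+2+(e:ℤ) := by exact_mod_cast he
          have hfc2 : fac w (c+2) = fac w c * brw w ((c:ℤ)+1) * brw w ((c:ℤ)+2) := by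
            rw [show c+2 = (c+1)+1 by omega, fac_succ, fac_succ]
            congr 2 <;> push_cast <;> ring
          have hfc1 : fac w (c+1) = fac w c * brw w ((c:ℤ)+1) := fac_succ w c
          have hfe2 : fac w (e+2) = fac w e * brw w ((e:ℤ)+1) * brw w ((e:ℤ)+2) := by
            rw [show e+2 = (e+1)+1 by omega, fac_succ, fac_succ]
            congr 2 <;> push_cast <;> ring
          have hfe1 : fac w (e+1) = fac w e * brw w ((e:ℤ)+1) := fac_succ w e
          have hbc1 : brw w ((c:ℤ)+1) ≠ 0 := by
            have h := hnz (c+1) (by omega) (by omega)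
            have harg : ((c+1:ℕ):ℤ) = (c:ℤ)+1 := by push_cast; ring
            rwa [harg] at h
          have hbc2 : brw w ((c:ℤ)+2) ≠ 0 := by
            have h := hnz (c+2) (by omega) (by omega)
            have harg : ((c+2:ℕ):ℤ) = (c:ℤ)+2 := by push_cast; ring
            rwa [harg] at h
          have hbe1 : brw w ((e:ℤ)+1) ≠ 0 := by
            have h := hnz (e+1) (by omega) (by omega)
            have harg : ((e+1:ℕ):ℤ) = (e:ℤ)+1 := by push_cast; ring
            rwa [harg] at h
          have hbe2 : brw w ((e:ℤ)+2) ≠ 0 := by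
            have h := hnz (e+2) (by omega) (by omega)
            have harg : ((e+2:ℕ):ℤ) = (e:ℤ)+2 := by push_cast; ring
            rwa [harg] at h
          have hfc : fac w c ≠ 0 := hfac c (by omega)
          have hfe : fac w e ≠ 0 := hfac e (by omega)
          have hp := brw_pascal w hw ((c:ℤ)+2) (2*(k:ℤ)+3)
          rw [show 2*(k:ℤ)+3-1 = 2*(k:ℤ)+2 by ring,
            show (c:ℤ)+2-1 = (c:ℤ)+1 by ring,
            show 2*(k:ℤ)+3-((c:ℤ)+2)-1 = (e:ℤ)+1 by omega,
            show 2*(k:ℤ)+3-((c:ℤ)+2) = (e:ℤ)+2 by omega,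
            show 1-(2*(k:ℤ)+3) = -(2*(k:ℤ)+2) by ring, zpow_neg, ← hQdef] at hp
          have hs2 : ((-1:ℂ))^(c+2) = (-1)^c := by rw [pow_add]; norm_num
          have hs1 : ((-1:ℂ))^(c+1) = -(-1)^c := by rw [pow_succ]; ring
          have hfc2ne : fac w (c+2) ≠ 0 := hfac _ (by omega)
          have hfe2ne : fac w (e+2) ≠ 0 := hfac _ (by omega)
          have hfc1ne : fac w (c+1) ≠ 0 := hfac _ (by omega)
          have hfe1ne : fac w (e+1) ≠ 0 := hfac _ (by omega)
          have hA : evQbin w (2*k+3) (c+2)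
              = (fac w (2*k+1) * (brw w (2*(k:ℤ)+2) * brw w (2*(k:ℤ)+3)))
                / (fac w (c+2) * fac w (e+2)) := by
            rw [evQbin_eq, show 2*k+3-(c+2) = e+2 by omega, hf3, hf2]; ring
          have hB : evQbin w (2*k+1) c
              = (fac w (2*k+1) * (brw w ((c:ℤ)+1) * brw w ((c:ℤ)+2)))
                / (fac w (c+2) * fac w (e+2)) := by
            rw [evQbin_eq, show 2*k+1-c = e+2 by omega,
              div_eq_div_iff (mul_ne_zero hfc hfe2ne) (mul_ne_zero hfc2ne hfe2ne), hfc2]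
            ring
          have hC : evQbin w (2*k+1) (c+2)
              = (fac w (2*k+1) * (brw w ((e:ℤ)+1) * brw w ((e:ℤ)+2)))
                / (fac w (c+2) * fac w (e+2)) := by
            rw [evQbin_eq, show 2*k+1-(c+2) = e by omega,
              div_eq_div_iff (mul_ne_zero hfc2ne hfe) (mul_ne_zero hfc2ne hfe2ne), hfe2]
            ring
          have hD : evQbin w (2*k+1) (c+1)
              = (fac w (2*k+1) * (brw w ((c:ℤ)+2) * brw w ((e:ℤ)+2)))
                / (fac w (c+2) * fac w (e+2)) := by
            rw [evQbin_eq, show 2*k+1-(c+1) = e+1 by omega,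
              div_eq_div_iff (mul_ne_zero hfc1ne hfe1ne) (mul_ne_zero hfc2ne hfe2ne),
              hfc2, hfe2, hfc1, hfe1]
            ring
          have hnum : brw w (2*(k:ℤ)+2) * brw w (2*(k:ℤ)+3)
              = brw w ((c:ℤ)+1)*brw w ((c:ℤ)+2) + brw w ((e:ℤ)+1)*brw w ((e:ℤ)+2)
                + (Q+Q⁻¹)*(brw w ((c:ℤ)+2)*brw w ((e:ℤ)+2)) := by
            linear_combination hp
          simp only [hPfdef, hRfdef, hTfdef, hadef]
          rw [if_pos (by omega : 2 ≤ c+2), if_pos (by omega : c+2 ≤ 2*k+1),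
            if_pos (by omega : 1 ≤ c+2 ∧ c+2 ≤ 2*k+2)]
          rw [show c+2-2 = c by omega, show c+2-1 = c+1 by omega]
          rw [hA, hB, hC, hD, hs2, hs1]
          linear_combination ((-1:ℂ)^c * x^(δ (c+2)) * fac w (2*k+1)
            / (fac w (c+2) * fac w (e+2))) * hnum
        · have hit : i = 2*k+2 ∨ i = 2*k+3 := by omega
          rcases hit with rfl | rfl
          · -- i = 2k+2
            have hC3 : evQbin w (2*k+3) (2*k+2) = brw w (2*(k:ℤ)+3) / brw w 1 := by
              rw [evQbin_eq, show 2*k+3-(2*k+2) = 1 by omega, hf3, fac_one,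
                mul_div_mul_left _ _ (hfac (2*k+2) (by omega))]
            have hC2k : evQbin w (2*k+1) (2*k) = brw w (2*(k:ℤ)+1) / brw w 1 := by
              rw [evQbin_eq, show 2*k+1-(2*k) = 1 by omega, hf1, fac_one,
                mul_div_mul_left _ _ (hfac (2*k) (by omega))]
            have hC2k1 : evQbin w (2*k+1) (2*k+1) = 1 := by
              rw [evQbin_eq, Nat.sub_self, fac_zero, mul_one, div_self hf21]
            have hs2 : ((-1:ℂ))^(2*k+2) = 1 := by
              rw [show 2*k+2 = 2*(k+1) by ring, pow_mul]; norm_num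
            have hs0 : ((-1:ℂ))^(2*k) = 1 := by rw [pow_mul]; norm_num
            have hs1 : ((-1:ℂ))^(2*k+1) = -1 := by rw [pow_succ, pow_mul]; norm_num
            simp only [hPfdef, hRfdef, hTfdef, hadef]
            rw [if_pos (by omega : 2 ≤ 2*k+2), if_neg (by omega : ¬ (2*k+2 ≤ 2*k+1)),
              if_pos (by omega : 1 ≤ 2*k+2 ∧ 2*k+2 ≤ 2*k+2)]
            rw [show 2*k+2-2 = 2*k by omega, show 2*k+2-1 = 2*k+1 by omega]
            rw [hC3, hC2k, hC2k1, htop, hs2, hs0, hs1]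
            field_simp
            ring
          · -- i = 2k+3
            have hC3 : evQbin w (2*k+3) (2*k+3) = 1 := by
              rw [evQbin_eq, Nat.sub_self, fac_zero, mul_one, div_self (hfac _ le_rfl)]
            have hC2k1 : evQbin w (2*k+1) (2*k+1) = 1 := by
              rw [evQbin_eq, Nat.sub_self, fac_zero, mul_one, div_self hf21]
            have hs3 : ((-1:ℂ))^(2*k+3) = -1 := by
              rw [show 2*k+3 = 2*(k+1)+1 by ring, pow_succ, pow_mul]; norm_num
            have hs1 : ((-1:ℂ))^(2*k+1) = -1 := by rw [pow_succ, pow_mul]; norm_num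
            simp only [hPfdef, hRfdef, hTfdef, hadef]
            rw [if_pos (by omega : 2 ≤ 2*k+3), if_neg (by omega : ¬ (2*k+3 ≤ 2*k+1)),
              if_neg (by omega : ¬ (1 ≤ 2*k+3 ∧ 2*k+3 ≤ 2*k+2))]
            rw [show 2*k+3-2 = 2*k+1 by omega]
            rw [hC3, hC2k1, hs3, hs1]
            ring
    have hPsum : ∑ i ∈ Finset.range (2*k+4), Pf i
        = ∑ j ∈ Finset.range (2*k+2), a j * x^(δ (j+2)) := by
      rw [show 2*k+4 = (2*k+3)+1 by ring, Finset.sum_range_succ',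
        show 2*k+3 = (2*k+2)+1 by ring, Finset.sum_range_succ']
      have h0 : Pf 0 = 0 := by simp only [hPfdef]; norm_num
      have h1 : Pf (0+1) = 0 := by simp only [hPfdef]; norm_num
      rw [h0, h1, add_zero, add_zero]
      apply Finset.sum_congr rfl
      intro j hj
      have hjj : j+1+1 = j+2 := by omega
      have hjj2 : j+2-2 = j := by omega
      rw [hjj]
      simp only [hPfdef, hjj2]
      rw [if_pos (by omega : 2 ≤ j+2)]
    have hRsum : ∑ i ∈ Finset.range (2*k+4), Rf i
        = ∑ j ∈ Finset.range (2*k+2), a j * x^(δ j) := by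
      rw [show 2*k+4 = (2*k+3)+1 by ring, Finset.sum_range_succ,
        show 2*k+3 = (2*k+2)+1 by ring, Finset.sum_range_succ]
      have h0 : Rf (2*k+2+1) = 0 := by simp only [hRfdef]; rw [if_neg (by omega)]
      have h1 : Rf (2*k+2) = 0 := by simp only [hRfdef]; rw [if_neg (by omega)]
      rw [h0, h1, add_zero, add_zero]
      apply Finset.sum_congr rfl
      intro j hj
      simp only [Finset.mem_range] at hj
      simp only [hRfdef]
      rw [if_pos (by omega : j ≤ 2*k+1)]
    have hTsum : ∑ i ∈ Finset.range (2*k+4), Tf i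
        = ∑ j ∈ Finset.range (2*k+2), -(Q+Q⁻¹) * a j * x^(δ (j+1)) := by
      rw [show 2*k+4 = (2*k+3)+1 by ring, Finset.sum_range_succ,
        show 2*k+3 = (2*k+2)+1 by ring, Finset.sum_range_succ']
      have h0 : Tf (2*k+2+1) = 0 := by simp only [hTfdef]; rw [if_neg (by omega)]
      have h1 : Tf 0 = 0 := by simp only [hTfdef]; rw [if_neg (by omega)]
      rw [h0, h1, add_zero, add_zero]
      apply Finset.sum_congr rfl
      intro j hj
      simp only [Finset.mem_range] at hj
      have hjj : j+1-1 = j := by omega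
      simp only [hTfdef, hjj]
      rw [if_pos (by omega : 1 ≤ j+1 ∧ j+1 ≤ 2*k+2)]
    have hmain : ∑ i ∈ Finset.range (2*k+4), (-1)^i * evQbin w (2*k+3) i * x^(δ i)
        = (∑ j ∈ Finset.range (2*k+2),
            (-1)^j * evQbin w (2*k+1) j * x^(2*(j:ℤ) - 2*(k:ℤ) - 1))
          * (x^(2:ℤ) + x^(-2:ℤ) - Q - Q⁻¹) := by
      rw [Finset.sum_congr rfl hterm]
      rw [Finset.sum_add_distrib, Finset.sum_add_distrib, hPsum, hRsum, hTsum]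
      rw [← Finset.sum_add_distrib, ← Finset.sum_add_distrib, Finset.sum_mul]
      apply Finset.sum_congr rfl
      intro j hj
      have e1 : δ (j+2) = (2*(j:ℤ) - 2*(k:ℤ) - 1) + 2 := by
        rw [hδdef]; push_cast; ring
      have e2 : δ j = (2*(j:ℤ) - 2*(k:ℤ) - 1) + (-2) := by
        rw [hδdef]; push_cast; ring
      have e3 : δ (j+1) = (2*(j:ℤ) - 2*(k:ℤ) - 1) + 0 := by
        rw [hδdef]; push_cast; ring
      rw [e1, e2, e3, zpow_add₀ hx, zpow_add₀ hx, zpow_add₀ hx, zpow_zero]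
      simp only [hadef]
      ring
    -- convert goal indices
    have hexp : ∀ j : ℕ, 2*(j:ℤ) - 2*((k+1:ℕ):ℤ) - 1 = δ j := by
      intro j; rw [hδdef]; push_cast; ring
    have hidx1 : 2*(k+1)+2 = 2*k+4 := by ring
    have hidx2 : 2*(k+1)+1 = 2*k+3 := by ring
    rw [hidx1, hidx2]
    simp only [hexp]
    rw [hmain]
    ring

/-- Let `r ≥ 3` be odd, `ξ` a primitive `r`-th root of unity,
`w = ξ^{(r+1)/2}`, `d` a nonzero integer coprime to `r`, `b` with `db ≡ 1 (mod r)`, and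
`0 ≤ k ≤ (r−3)/2`.  Then
`Σ^ξ_n ξ^{d(n²−1)/4}·ev_ξ([n+k choose 2k+1]{k}!{n})
  = −2·γ_d(ξ)·Ỹ(k,−b)(w)·∏_{i=1}^{k}(w^i−w^{−i})/∏_{i=1}^{2k+1}(w^i−w^{−i})`. -/
theorem laplace_transform_framed (r : ℕ) (hr : 3 ≤ r) (hodd : Odd r) (ξ : ℂ)
    (hξ : IsPrimitiveRoot ξ r) (d : ℤ) (hd : d ≠ 0) (hdr : IsCoprime d (r : ℤ))
    (b : ℤ) (hb : d * b ≡ 1 [ZMOD (r : ℤ)]) (k : ℕ) (hk : k ≤ (r - 3) / 2) :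
    ∑ n ∈ oddS r, ξ ^ (d * ((n : ℤ) ^ 2 - 1) / 4) * evBinomTerm (ξ ^ ((r + 1) / 2)) k n =
      -2 * (∑ n ∈ oddS r, ξ ^ (d * ((n : ℤ) ^ 2 - 1) / 4)) *
        Ytw (ξ ^ ((r + 1) / 2)) k (-b) *
        (∏ i ∈ Finset.Icc 1 k, brw (ξ ^ ((r + 1) / 2)) (i : ℤ)) /
        ∏ i ∈ Finset.Icc 1 (2 * k + 1), brw (ξ ^ ((r + 1) / 2)) (i : ℤ) := by
  have hr0 : 0 < r := by omega
  have hξ0 : ξ ≠ 0 := hξ.ne_zero (by omega)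
  have hξ1 : ξ ^ r = 1 := hξ.pow_eq_one
  set w : ℂ := ξ ^ ((r + 1) / 2) with hwdef
  have hw0 : w ≠ 0 := pow_ne_zero _ hξ0
  have hw2 : w ^ 2 = ξ := by
    rw [hwdef, ← pow_mul]
    rcases hodd with ⟨s, hs⟩
    rw [show (r+1)/2*2 = r + 1 by omega, pow_succ, hξ1, one_mul]
  have hodd' : Odd r := hodd
  -- nonvanishing of the brackets
  have hbrw_ne : ∀ i : ℕ, 1 ≤ i → i ≤ r - 1 → brw w (i:ℤ) ≠ 0 := by
    intro i h1 h2 h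
    simp only [brw] at h
    have hww : w ^ (i:ℤ) * w ^ (i:ℤ) = 1 := by
      rw [sub_eq_zero] at h
      nth_rewrite 2 [h]
      rw [← zpow_add₀ hw0, add_neg_cancel, zpow_zero]
    have hxi1 : ξ ^ i = 1 := by
      rw [← hw2, ← pow_mul, show 2*i = i + i by ring, pow_add, ← zpow_natCast w i, hww]
    exact hξ.pow_ne_one_of_pos_of_lt (by omega) (by omega) hxi1
  have hk2 : 2 * k + 1 ≤ r - 2 := by
    rcases hodd' with ⟨s, hs⟩
    omega
  have hnzk : ∀ i : ℕ, 1 ≤ i → i ≤ 2*k+1 → brw w (i:ℤ) ≠ 0 :=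
    fun i h1 h2 => hbrw_ne i h1 (by omega)
  have hfack : ∀ m : ℕ, m ≤ 2*k+1 → fac w m ≠ 0 := fac_ne_zero w (2*k+1) hnzk
  -- the Laplace transform
  have hla : ∀ c : ℤ, ∑ n ∈ oddS r, ξ ^ (d * ((n:ℤ)^2 - 1) / 4) * ξ ^ (c * (n:ℤ))
      = (∑ n ∈ oddS r, ξ ^ (d * ((n:ℤ)^2 - 1) / 4)) * ξ ^ (-b * c^2) :=
    laplace r hr hodd' ξ hξ0 hξ1 d b hb
  set γ : ℂ := ∑ n ∈ oddS r, ξ ^ (d * ((n:ℤ)^2 - 1) / 4) with hγdef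
  -- powers of w squared are powers of ξ
  have hw2z : ∀ m : ℤ, w ^ (2*m) = ξ ^ m := by
    intro m
    rw [zpow_mul, show w ^ (2:ℤ) = ξ by rw [show (2:ℤ) = ((2:ℕ):ℤ) by norm_num,
      zpow_natCast, hw2]]
  -- the bracket-product expansion for x = w^n
  have hPn : ∀ n : ℕ,
      (∏ j ∈ Finset.range (2*k+1), brw w ((n:ℤ) - (k:ℤ) + (j:ℤ)))
        = -∑ j ∈ Finset.range (2*k+2), (-1)^j * evQbin w (2*k+1) j
            * (w ^ ((n:ℤ)))^(2*(j:ℤ) - 2*(k:ℤ) - 1) := by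
    intro n
    have hx : w ^ ((n:ℤ)) ≠ 0 := zpow_ne_zero _ hw0
    rw [← expand w hw0 k hnzk (w ^ ((n:ℤ))) hx]
    apply Finset.prod_congr rfl
    intro j hj
    rw [brw, show (n:ℤ) - (k:ℤ) + (j:ℤ) = (n:ℤ) + ((j:ℤ) - (k:ℤ)) by ring,
      show -((n:ℤ) + ((j:ℤ) - (k:ℤ))) = -(n:ℤ) + ((k:ℤ) - (j:ℤ)) by ring,
      zpow_add₀ hw0, zpow_add₀ hw0, zpow_neg]
  -- key per-term identity
  have hkey : ∀ (n j : ℕ), brw w (n:ℤ) * (w ^ ((n:ℤ)))^(2*(j:ℤ) - 2*(k:ℤ) - 1)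
      = ξ ^ (((j:ℤ) - (k:ℤ)) * (n:ℤ)) - ξ ^ (((j:ℤ) - (k:ℤ) - 1) * (n:ℤ)) := by
    intro n j
    rw [brw, ← zpow_mul, sub_mul, ← zpow_add₀ hw0, ← zpow_add₀ hw0,
      show (n:ℤ) + (n:ℤ) * (2*(j:ℤ) - 2*(k:ℤ) - 1) = 2 * (((j:ℤ) - (k:ℤ)) * (n:ℤ)) by ring,
      show -(n:ℤ) + (n:ℤ) * (2*(j:ℤ) - 2*(k:ℤ) - 1) = 2 * (((j:ℤ) - (k:ℤ) - 1) * (n:ℤ)) by ring,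
      hw2z, hw2z]
  -- the two Ytw-type sums
  have hT1 : ∑ j ∈ Finset.range (2*k+2), (-1)^j * evQbin w (2*k+1) j
      * ξ ^ (-b * ((j:ℤ) - (k:ℤ))^2) = Ytw w k (-b) := by
    simp only [Ytw, hw2]
  have hT2 : ∑ j ∈ Finset.range (2*k+2), (-1)^j * evQbin w (2*k+1) j
      * ξ ^ (-b * ((j:ℤ) - (k:ℤ) - 1)^2) = - Ytw w k (-b) := by
    have hrefl := Finset.sum_range_reflect
      (fun j => ((-1:ℂ))^j * evQbin w (2*k+1) j * ξ ^ (-b * ((j:ℤ) - (k:ℤ) - 1)^2))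
      (2*k+2)
    rw [← hrefl, ← hT1, ← Finset.sum_neg_distrib]
    apply Finset.sum_congr rfl
    intro j hj
    simp only [Finset.mem_range] at hj
    have hj' : j ≤ 2*k+1 := by omega
    rw [show 2*k+2-1-j = 2*k+1-j by omega]
    have hmul : ((-1:ℂ))^(2*k+1-j) * (-1)^j = -1 := by
      rw [← pow_add, show 2*k+1-j+j = 2*k+1 by omega, pow_succ, pow_mul]; norm_num
    have hsq : ((-1:ℂ))^j * (-1)^j = 1 := by
      rw [← pow_add, show j+j = 2*j by ring, pow_mul]; norm_num
    have hs : ((-1:ℂ))^(2*k+1-j) = -(-1)^j := by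
      calc ((-1:ℂ))^(2*k+1-j) = (-1)^(2*k+1-j) * ((-1)^j * (-1)^j) := by rw [hsq, mul_one]
        _ = ((-1)^(2*k+1-j) * (-1)^j) * (-1)^j := by ring
        _ = -(-1)^j := by rw [hmul]; ring
    have hsym : evQbin w (2*k+1) (2*k+1-j) = evQbin w (2*k+1) j := by
      rw [evQbin_eq, evQbin_eq, show 2*k+1-(2*k+1-j) = j by omega]
      ring
    have hexp : -b * (((2*k+1-j:ℕ):ℤ) - (k:ℤ) - 1)^2 = -b * (((j:ℤ) - (k:ℤ))^2) := by
      have hc : ((2*k+1-j:ℕ):ℤ) = 2*(k:ℤ)+1-(j:ℤ) := by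
        rw [Nat.cast_sub hj']; push_cast; ring
      rw [hc]; ring
    rw [hs, hsym, hexp]
    ring
  -- the inner sum
  have hinner : ∑ n ∈ oddS r, ξ ^ (d * ((n:ℤ)^2 - 1) / 4) * (brw w (n:ℤ) *
        ∏ j ∈ Finset.range (2*k+1), brw w ((n:ℤ) - (k:ℤ) + (j:ℤ)))
      = -2 * γ * Ytw w k (-b) := by
    calc ∑ n ∈ oddS r, ξ ^ (d * ((n:ℤ)^2 - 1) / 4) * (brw w (n:ℤ) *
          ∏ j ∈ Finset.range (2*k+1), brw w ((n:ℤ) - (k:ℤ) + (j:ℤ)))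
        = ∑ n ∈ oddS r, ∑ j ∈ Finset.range (2*k+2), (-1)^j * evQbin w (2*k+1) j *
            (ξ ^ (d * ((n:ℤ)^2 - 1) / 4) * ξ ^ (((j:ℤ) - (k:ℤ) - 1) * (n:ℤ))
              - ξ ^ (d * ((n:ℤ)^2 - 1) / 4) * ξ ^ (((j:ℤ) - (k:ℤ)) * (n:ℤ))) := by
          apply Finset.sum_congr rfl
          intro n hn
          rw [hPn n, mul_neg, mul_neg, Finset.mul_sum, Finset.mul_sum,
            ← Finset.sum_neg_distrib]
          apply Finset.sum_congr rfl
          intro j hj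
          linear_combination (-(ξ ^ (d * ((n:ℤ)^2 - 1) / 4)) * (-1)^j
            * evQbin w (2*k+1) j) * hkey n j
      _ = ∑ j ∈ Finset.range (2*k+2), ∑ n ∈ oddS r, (-1)^j * evQbin w (2*k+1) j *
            (ξ ^ (d * ((n:ℤ)^2 - 1) / 4) * ξ ^ (((j:ℤ) - (k:ℤ) - 1) * (n:ℤ))
              - ξ ^ (d * ((n:ℤ)^2 - 1) / 4) * ξ ^ (((j:ℤ) - (k:ℤ)) * (n:ℤ))) :=
          Finset.sum_comm
      _ = ∑ j ∈ Finset.range (2*k+2), (-1)^j * evQbin w (2*k+1) j *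
            ((∑ n ∈ oddS r, ξ ^ (d * ((n:ℤ)^2 - 1) / 4) * ξ ^ (((j:ℤ) - (k:ℤ) - 1) * (n:ℤ)))
              - ∑ n ∈ oddS r, ξ ^ (d * ((n:ℤ)^2 - 1) / 4) * ξ ^ (((j:ℤ) - (k:ℤ)) * (n:ℤ))) := by
          apply Finset.sum_congr rfl
          intro j hj
          rw [← Finset.sum_sub_distrib, Finset.mul_sum]
      _ = ∑ j ∈ Finset.range (2*k+2), (-1)^j * evQbin w (2*k+1) j *
            (γ * ξ ^ (-b * ((j:ℤ) - (k:ℤ) - 1)^2) - γ * ξ ^ (-b * ((j:ℤ) - (k:ℤ))^2)) := by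
          apply Finset.sum_congr rfl
          intro j hj
          rw [hla ((j:ℤ) - (k:ℤ) - 1), hla ((j:ℤ) - (k:ℤ))]
      _ = γ * ((∑ j ∈ Finset.range (2*k+2), (-1)^j * evQbin w (2*k+1) j
              * ξ ^ (-b * ((j:ℤ) - (k:ℤ) - 1)^2))
            - ∑ j ∈ Finset.range (2*k+2), (-1)^j * evQbin w (2*k+1) j
              * ξ ^ (-b * ((j:ℤ) - (k:ℤ))^2)) := by
          rw [← Finset.sum_sub_distrib, Finset.mul_sum]
          apply Finset.sum_congr rfl
          intro j hj
          ring
      _ = -2 * γ * Ytw w k (-b) := by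
          rw [hT1, hT2]
          ring
  -- final assembly
  have hfk : (∏ i ∈ Finset.Icc 1 k, brw w (i:ℤ)) = fac w k := rfl
  have hfm : (∏ i ∈ Finset.Icc 1 (2*k+1), brw w (i:ℤ)) = fac w (2*k+1) := rfl
  calc ∑ n ∈ oddS r, ξ ^ (d * ((n:ℤ)^2 - 1) / 4) * evBinomTerm w k n
      = (∑ n ∈ oddS r, ξ ^ (d * ((n:ℤ)^2 - 1) / 4) * (brw w (n:ℤ) *
          ∏ j ∈ Finset.range (2*k+1), brw w ((n:ℤ) - (k:ℤ) + (j:ℤ))))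
          * (fac w k / fac w (2*k+1)) := by
        rw [Finset.sum_mul]
        apply Finset.sum_congr rfl
        intro n hn
        simp only [evBinomTerm, hfk, hfm]
        ring
    _ = (-2 * γ * Ytw w k (-b)) * (fac w k / fac w (2*k+1)) := by rw [hinner]
    _ = -2 * γ * Ytw w k (-b) * (∏ i ∈ Finset.Icc 1 k, brw w (i:ℤ))
          / ∏ i ∈ Finset.Icc 1 (2*k+1), brw w (i:ℤ) := by
        rw [hfk, hfm]
        ring


end
end

section
/- Let p be a prime, e > 0 an integer, n ≥ 1, and m = n·p^e. Then in ℤ[t] one has the equality of ideals (Φ_m) + (Φ_n) = (p) + (Φ_n), where Φ_s denotes the s-th cyclotomic polynomial. -/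
open Polynomial

/-- Over `ZMod p`, `Φ_{n·p^e}` is a positive power of `Φ_n`. -/
lemma cyclotomic_zmod_pow_aux (p : ℕ) (hp : p.Prime) (n : ℕ) :
    ∀ e : ℕ, 0 < e → ∃ k : ℕ, 0 < k ∧
      cyclotomic (n * p ^ e) (ZMod p) = cyclotomic n (ZMod p) ^ k := by
  haveI : Fact p.Prime := ⟨hp⟩
  intro e he
  induction e with
  | zero => omega
  | succ e ih =>
    rcases Nat.eq_zero_or_pos e with rfl | he'
    · by_cases hdvd : p ∣ n
      · exact ⟨p, hp.pos, by
          rw [pow_one, cyclotomic_mul_prime_dvd_eq_pow (ZMod p) hdvd]⟩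
      · exact ⟨p - 1, by have := hp.two_le; omega, by
          rw [pow_one, cyclotomic_mul_prime_eq_pow_of_not_dvd (ZMod p) hdvd]⟩
    · obtain ⟨k, hk, hke⟩ := ih he'
      refine ⟨k * p, Nat.mul_pos hk hp.pos, ?_⟩
      have hdvd : p ∣ n * p ^ e := Dvd.dvd.mul_left (dvd_pow_self p he'.ne') n
      rw [pow_succ, ← mul_assoc, cyclotomic_mul_prime_dvd_eq_pow (ZMod p) hdvd, hke, ← pow_mul]

/-- `Φ_{k·p}` divides `Φ_p(X^k)` in `ℤ[X]`. -/
lemma cyclotomic_dvd_expand_aux (p : ℕ) (hp : p.Prime) (k : ℕ) (hk : 0 < k) :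
    cyclotomic (k * p) ℤ ∣ expand ℤ k (cyclotomic p ℤ) := by
  haveI : Fact p.Prime := ⟨hp⟩
  have hXk : (X : ℤ[X]) ^ k - 1 ≠ 0 := by
    have := X_pow_sub_C_ne_zero hk (1 : ℤ)
    simpa using this
  have hmem : k ∈ (k * p).properDivisors := by
    rw [Nat.mem_properDivisors]
    exact ⟨Dvd.intro p rfl, lt_mul_iff_one_lt_right hk |>.2 hp.one_lt⟩
  have h1 : ((X : ℤ[X]) ^ k - 1) * cyclotomic (k * p) ℤ ∣ X ^ (k * p) - 1 :=
    X_pow_sub_one_mul_cyclotomic_dvd_X_pow_sub_one_of_dvd ℤ hmem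
  have h2 : ((X : ℤ[X]) ^ k - 1) * expand ℤ k (cyclotomic p ℤ) = X ^ (k * p) - 1 := by
    have := congrArg (expand ℤ k) (cyclotomic_prime_mul_X_sub_one ℤ p)
    simp only [map_mul, map_sub, map_one, map_pow, expand_X] at this
    rw [pow_mul]
    linear_combination this
  rw [← h2] at h1
  exact (mul_dvd_mul_iff_left hXk).mp h1

/-- Let `p` be a prime, `e > 0`, `n ≥ 1`, and `m = n·p^e`. Then in `ℤ[t]`
one has the equality of ideals `(Φ_m) + (Φ_n) = (p) + (Φ_n)`. -/
theorem cyclotomic_ideal_sum (p : ℕ) (hp : p.Prime) (e n : ℕ) (he : 0 < e) (hn : 1 ≤ n) :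
    Ideal.span {cyclotomic (n * p ^ e) ℤ} + Ideal.span {cyclotomic n ℤ} =
      Ideal.span {(p : ℤ[X])} + Ideal.span {cyclotomic n ℤ} := by
  rw [Ideal.add_eq_sup, Ideal.add_eq_sup]
  haveI : Fact p.Prime := ⟨hp⟩
  -- Part 1: Φ_m ∈ (p) ⊔ (Φ_n)
  obtain ⟨k, hk, hke⟩ := cyclotomic_zmod_pow_aux p hp n e he
  have hmem1 : cyclotomic (n * p ^ e) ℤ ∈
      Ideal.span {(p : ℤ[X])} ⊔ Ideal.span {cyclotomic n ℤ} := by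
    have hsub : cyclotomic (n * p ^ e) ℤ - cyclotomic n ℤ ^ k ∈
        Ideal.span {(p : ℤ[X])} := by
      rw [Ideal.mem_span_singleton]
      have hpc : (p : ℤ[X]) = C (p : ℤ) := by simp
      rw [hpc, C_dvd_iff_dvd_coeff]
      intro i
      have h0 : Polynomial.map (Int.castRingHom (ZMod p))
          (cyclotomic (n * p ^ e) ℤ - cyclotomic n ℤ ^ k) = 0 := by
        rw [Polynomial.map_sub, Polynomial.map_pow, map_cyclotomic, map_cyclotomic, hke,
          sub_self]
      have := congrArg (fun q => Polynomial.coeff q i) h0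
      simp only [coeff_map, coeff_zero] at this
      exact (ZMod.intCast_zmod_eq_zero_iff_dvd _ p).mp this
    have : cyclotomic (n * p ^ e) ℤ =
        (cyclotomic (n * p ^ e) ℤ - cyclotomic n ℤ ^ k) + cyclotomic n ℤ ^ k := by ring
    rw [this]
    exact add_mem (Ideal.mem_sup_left hsub)
      (Ideal.mem_sup_right (Ideal.mem_span_singleton.mpr (dvd_pow_self _ hk.ne')))
  -- Part 2: p ∈ (Φ_m) ⊔ (Φ_n)
  have hmem2 : (p : ℤ[X]) ∈
      Ideal.span {cyclotomic (n * p ^ e) ℤ} ⊔ Ideal.span {cyclotomic n ℤ} := by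
    set K := n * p ^ (e - 1) with hK
    have hKpos : 0 < K := Nat.mul_pos hn (pow_pos hp.pos _)
    have hm : n * p ^ e = K * p := by
      rw [hK, mul_assoc, ← pow_succ]
      congr 2
      omega
    have hd1 : cyclotomic (n * p ^ e) ℤ ∣ expand ℤ K (cyclotomic p ℤ) := by
      rw [hm]; exact cyclotomic_dvd_expand_aux p hp K hKpos
    have hd2 : cyclotomic n ℤ ∣ expand ℤ K (cyclotomic p ℤ) - C (p : ℤ) := by
      have s1 : cyclotomic n ℤ ∣ (X : ℤ[X]) ^ n - 1 := cyclotomic.dvd_X_pow_sub_one n ℤ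
      have s2 : (X : ℤ[X]) ^ n - 1 ∣ X ^ K - 1 := by
        have := sub_dvd_pow_sub_pow ((X : ℤ[X]) ^ n) 1 (p ^ (e - 1))
        rwa [one_pow, ← pow_mul] at this
      have s3 : (X : ℤ[X]) ^ K - 1 ∣ expand ℤ K (cyclotomic p ℤ) - C (p : ℤ) := by
        have hev : (X : ℤ[X]) - C 1 ∣ cyclotomic p ℤ - C ((cyclotomic p ℤ).eval 1) :=
          X_sub_C_dvd_sub_C_eval
        rw [eval_one_cyclotomic_prime] at hev
        have := map_dvd (expand ℤ K) hev
        rwa [map_sub, map_sub, expand_X, expand_C, expand_C, map_one] at this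
      exact dvd_trans s1 (dvd_trans s2 s3)
    have hpeq : (p : ℤ[X]) =
        expand ℤ K (cyclotomic p ℤ) - (expand ℤ K (cyclotomic p ℤ) - C (p : ℤ)) := by
      have hpc : (p : ℤ[X]) = C (p : ℤ) := by simp
      rw [hpc]; ring
    rw [hpeq]
    exact sub_mem (Ideal.mem_sup_left (Ideal.mem_span_singleton.mpr hd1))
      (Ideal.mem_sup_right (Ideal.mem_span_singleton.mpr hd2))
  apply le_antisymm
  · exact sup_le ((Ideal.span_le).mpr (by simpa using hmem1)) le_sup_right
  · exact sup_le ((Ideal.span_le).mpr (by simpa using hmem2)) le_sup_right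
end

section
/- Let d ≥ 1, let m_1, …, m_k be positive integers (not necessarily distinct) each coprime to d, let n be a positive integer not coprime to d, and set f = ∏_{i=1}^k Φ_{m_i}(t). Then the image of Φ_n(t) in the quotient ring ℤ[1/d][t]/(f) is a unit. -/
/-!
If `Φ_n` were not a unit modulo `f`, some maximal ideal `M` of `ℤ[1/d][t]` would contain `Φ_n`
and some `Φ_{m_i}`, so the image `x` of `t` in the field `K = ℤ[1/d][t]/M` is a common root of both.
If `K` has characteristic `q > 0`, then `x` is a primitive root of unity of order the `q`-free part
of both `n` and `m_i`, so these agree (in characteristic zero, `n = m_i`). A prime `p ∣ gcd(n, d)`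
does not divide `m_i`, hence must be the characteristic of `K`; but `d` is invertible in `K`.
-/

open Polynomial

theorem Ideal.Quotient.isUnit_mk_span_singleton {S : Type*} [CommRing S] {a b : S}
    (h : ∀ M : Ideal S, M.IsMaximal → a ∈ M → b ∉ M) :
    IsUnit (Ideal.Quotient.mk (Ideal.span {a}) b) := by
  have hab : IsCoprime a b := by
    rw [← Ideal.isCoprime_span_singleton_iff, Ideal.isCoprime_iff_sup_eq]
    by_contra hne
    obtain ⟨M, hM, hle⟩ := Ideal.exists_le_maximal _ hne
    exact h M hM (hle (Ideal.mem_sup_left (Ideal.mem_span_singleton_self a)))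
      (hle (Ideal.mem_sup_right (Ideal.mem_span_singleton_self b)))
  obtain ⟨u, v, huv⟩ := hab
  refine .of_mul_eq_one (Ideal.Quotient.mk _ v) ?_
  rw [← map_mul, ← map_one (Ideal.Quotient.mk _), Ideal.Quotient.eq, mul_comm, ← huv]
  simp [Ideal.mem_span_singleton]

theorem Polynomial.ne_zero_of_isRoot_cyclotomic {R : Type*} [CommRing R] [Nontrivial R]
    {n : ℕ} {x : R} (hx : (cyclotomic n R).IsRoot x) : n ≠ 0 := by
  rintro rfl
  simp at hx

theorem Polynomial.ordCompl_eq_of_isRoot_cyclotomic {R : Type*} [CommRing R] [IsDomain R]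
    {q : ℕ} [hq : Fact q.Prime] [CharP R q] {n m : ℕ} {x : R}
    (hn : (cyclotomic n R).IsRoot x) (hm : (cyclotomic m R).IsRoot x) :
    ordCompl[q] n = ordCompl[q] m := by
  have primitive {s : ℕ} (hs : (cyclotomic s R).IsRoot x) : IsPrimitiveRoot x (ordCompl[q] s) := by
    have : NeZero (ordCompl[q] s : R) := ⟨fun h => Nat.not_dvd_ordCompl hq.out
      (ne_zero_of_isRoot_cyclotomic hs) ((CharP.cast_eq_zero_iff R q _).mp h)⟩
    rwa [← isRoot_cyclotomic_prime_pow_mul_iff_of_charP (p := q) (k := s.factorization q),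
      Nat.ordProj_mul_ordCompl_eq_self]
  exact (primitive hn).unique (primitive hm)

theorem Polynomial.natCast_eq_zero_of_isRoot_cyclotomic {K : Type*} [Field K] {n m p : ℕ}
    (hp : p.Prime) (hpn : p ∣ n) (hpm : ¬ p ∣ m) {x : K}
    (hn : (cyclotomic n K).IsRoot x) (hm : (cyclotomic m K).IsRoot x) : (p : K) = 0 := by
  rcases CharP.char_is_prime_or_zero K (ringChar K) with hq | hq
  · have : Fact (ringChar K).Prime := ⟨hq⟩
    by_cases hpq : p = ringChar K
    · rw [hpq, ringChar.Nat.cast_ringChar]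
    have hp_dvd : p ∣ ordCompl[ringChar K] n :=
      Nat.dvd_ordCompl_of_dvd_not_dvd hpn fun h => hpq ((Nat.prime_dvd_prime_iff_eq hq hp).mp h).symm
    rw [ordCompl_eq_of_isRoot_cyclotomic hn hm] at hp_dvd
    exact absurd (hp_dvd.trans (Nat.ordCompl_dvd m _)) hpm
  · have : CharP K 0 := hq ▸ ringChar.charP K
    have : CharZero K := CharP.charP_to_charZero K
    have primitive {s : ℕ} (hs : (cyclotomic s K).IsRoot x) : IsPrimitiveRoot x s := by
      have : NeZero (s : K) := ⟨Nat.cast_ne_zero.mpr (ne_zero_of_isRoot_cyclotomic hs)⟩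
      exact isRoot_cyclotomic_iff.mp hs
    exact absurd ((primitive hn).unique (primitive hm) ▸ hpn) hpm

theorem Polynomial.ringHom_cyclotomic_eq_eval {A K : Type*} [CommRing A] [CommRing K]
    (φ : A[X] →+* K) (s : ℕ) : φ (cyclotomic s A) = (cyclotomic s K).eval (φ X) := by
  rw [← eval₂_C_X (p := cyclotomic s A), hom_eval₂, eval₂_eq_eval_map, map_cyclotomic]

theorem cyclotomic_isUnit_in_quotient_general (d : ℕ) (k : ℕ) (m : Fin k → ℕ)
    (hmc : ∀ i, Nat.Coprime (m i) d) (n : ℕ)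
    (hnc : ¬ Nat.Coprime n d) :
    IsUnit (Ideal.Quotient.mk
      (@Ideal.span _ CommRing.toRing.toSemiring {Polynomial.map (algebraMap ℤ (Localization.Away (d : ℤ)))
        (∏ i, cyclotomic (m i) ℤ)})
      (Polynomial.map (algebraMap ℤ (Localization.Away (d : ℤ))) (cyclotomic n ℤ))) := by
  refine Ideal.Quotient.isUnit_mk_span_singleton fun M hM hf hg => ?_
  let := Ideal.Quotient.field M
  set x := Ideal.Quotient.mk M X
  obtain ⟨p, hp, hpnd⟩ := Nat.exists_prime_and_dvd hnc
  have hpn := hpnd.trans (Nat.gcd_dvd_left n d)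
  have hpd := hpnd.trans (Nat.gcd_dvd_right n d)
  have hn : (cyclotomic n (_ ⧸ M)).IsRoot x := by
    simpa [map_cyclotomic, ringHom_cyclotomic_eq_eval] using Ideal.Quotient.eq_zero_iff_mem.mpr hg
  obtain ⟨i, -, hi⟩ : ∃ i ∈ Finset.univ, (cyclotomic (m i) (_ ⧸ M)).IsRoot x := by
    refine Finset.prod_eq_zero_iff.mp ?_
    simpa [Polynomial.map_prod, map_cyclotomic, ringHom_cyclotomic_eq_eval] using
      Ideal.Quotient.eq_zero_iff_mem.mpr hf
  have hp0 : (p : _ ⧸ M) = 0 := natCast_eq_zero_of_isRoot_cyclotomic hp hpn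
    (fun hpm => hp.one_lt.ne' (Nat.eq_one_of_dvd_coprimes (hmc i) hpm hpd)) hn hi
  have hd : IsUnit (d : _ ⧸ M) := by
    simpa using (IsLocalization.Away.algebraMap_isUnit (S := Localization.Away (d : ℤ)) (d : ℤ)).map
      ((Ideal.Quotient.mk M).comp C)
  have hd0 : (d : _ ⧸ M) = 0 := zero_dvd_iff.mp (hp0 ▸ Nat.cast_dvd_cast hpd)
  exact not_isUnit_zero (hd0 ▸ hd)

/-- Let `d ≥ 1`, let `m_1, …, m_k` be positive integers each coprime to `d`,
let `n` be a positive integer not coprime to `d`, and set `f = ∏ Φ_{m_i}(t)`. Then the image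
of `Φ_n(t)` in `ℤ[1/d][t]/(f)` is a unit.  Here `ℤ[1/d]` is realized as `Localization.Away (d : ℤ)`. -/
theorem cyclotomic_isUnit_in_quotient (d : ℕ) (hd : 1 ≤ d) (k : ℕ) (m : Fin k → ℕ)
    (hm : ∀ i, 1 ≤ m i) (hmc : ∀ i, Nat.Coprime (m i) d) (n : ℕ) (hn : 1 ≤ n)
    (hnc : ¬ Nat.Coprime n d) :
    IsUnit (Ideal.Quotient.mk
      (@Ideal.span _ CommRing.toRing.toSemiring {Polynomial.map (algebraMap ℤ (Localization.Away (d : ℤ)))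
        (∏ i, cyclotomic (m i) ℤ)})
      (Polynomial.map (algebraMap ℤ (Localization.Away (d : ℤ))) (cyclotomic n ℤ))) :=
  cyclotomic_isUnit_in_quotient_general d k m hmc n hnc
end

section
/- For every g ∈ Λ̂_d and every ξ ∈ U_d, the evaluation ev_ξ(g) lies in the subring ℤ[1/d][ξ] of ℂ generated by 1/d and ξ. -/
noncomputable section

open Polynomial

/-- The ring `Γ_d`: the localization of `ℤ[1/d][t^{±1}]` at the multiplicative set generated
by the cyclotomic polynomials `Φ_s(t)` with `gcd(s,d) > 1`, realized as a subring of `ℚ(t)`. -/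
def Gd (d : ℕ) : Subring (RatFunc ℚ) :=
  Subring.closure
    ({((d : RatFunc ℚ))⁻¹, RatFunc.X, (RatFunc.X)⁻¹} ∪
      {x | ∃ s : ℕ, 1 ≤ s ∧ 1 < Nat.gcd s d ∧
        x = (Polynomial.aeval RatFunc.X (cyclotomic s ℚ))⁻¹})

/-- The element `t` of `Γ_d`. -/
def tG (d : ℕ) : Gd d := ⟨RatFunc.X, Subring.subset_closure (by simp)⟩

/-- `(q;q)_n` as an element of `Γ_d`, where `q = t^d`. -/
def pochG (d n : ℕ) : Gd d := ∏ i ∈ Finset.range n, (1 - ((tG d) ^ d) ^ (i + 1))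

/-- The principal ideal `((q;q)_n)` of `Γ_d`. -/
def idlG (d n : ℕ) : Ideal (Gd d) := Ideal.span {pochG d n}

lemma idlG_succ_le (d n : ℕ) : idlG d (n + 1) ≤ idlG d n := by
  rw [idlG, Ideal.span_le, Set.singleton_subset_iff]
  exact Ideal.mem_span_singleton.2 ⟨_, Finset.prod_range_succ _ n⟩

set_option maxHeartbeats 2000000 in
set_option synthInstance.maxHeartbeats 1000000 in
/-- The Habiro-type ring `Λ̂_d = lim_n Γ_d/((q;q)_n)`, realized concretely as the ring of
sequences `(x_n)` with `x_n ∈ Γ_d/((q;q)_n)` compatible under the natural projections. -/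
def LamHat (d : ℕ) : Subring (∀ n, Gd d ⧸ idlG d n) where
  carrier := {x | ∀ n,
    Ideal.Quotient.factor (idlG_succ_le d n) (x (n + 1)) = x n}
  zero_mem' := fun n => map_zero _
  one_mem' := fun n => map_one _
  add_mem' := fun {a b} ha hb n => by
    simp only [Pi.add_apply, map_add, ha n, hb n]
  mul_mem' := fun {a b} ha hb n => by
    simp only [Pi.mul_apply, map_mul, ha n, hb n]
  neg_mem' := fun {a} ha n => by
    simp only [Pi.neg_apply, map_neg, ha n]

/-!
Evaluation at `ζ = ξ ^ b` is a ring homomorphism on the rational functions that are regular at `ζ`,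
so it suffices to check that the generators of `Γ_d` are regular at `ζ` with value in
`ℤ[1/d][ξ]`. For `1/d` and `t^{±1}` this is clear. For `Φ_s` with `p = gcd(s, d) > 1`, write
`s = p m`: then `Φ_s(ζ)` divides `(ζ^s - 1)/(ζ^m - 1) = 1 + ζ^m + ⋯ + ζ^{(p-1)m}`. This is `p`
if `ζ^m = 1`; otherwise it is still a unit, because `p` is prime to the order of `ζ^m`, so that
`ζ^m` is a power of `ζ^s = (ζ^m)^p` and `ζ^s - 1` divides `ζ^m - 1`. Since `p ∣ d`, `p` is a unit.
-/

namespace RatFunc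
universe u
variable {K : Type u} [Field K]

theorem denom_neg (x : RatFunc K) : (-x).denom = x.denom := by
  have key : ∀ y : RatFunc K, (-y).denom ∣ y.denom := fun y =>
    (denom_dvd y.denom_ne_zero).2 ⟨-y.num, by rw [map_neg, neg_div, num_div_denom]⟩
  exact eq_of_monic_of_associated (monic_denom _) (monic_denom _)
    (associated_of_dvd_dvd (key x) (by simpa using key (-x)))

theorem num_neg (x : RatFunc K) : (-x).num = -x.num :=
  mul_right_cancel₀ x.denom_ne_zero (by simpa [denom_neg] using num_denom_neg x)

theorem num_inv_algebraMap {q : K[X]} (hq : q.Monic) :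
    (algebraMap K[X] (RatFunc K) q)⁻¹.num = 1 := by
  classical
  rw [← one_div, ← map_one (algebraMap K[X] (RatFunc K)), num_div]
  simp [hq.leadingCoeff]

theorem denom_inv_algebraMap {q : K[X]} (hq : q.Monic) :
    (algebraMap K[X] (RatFunc K) q)⁻¹.denom = q := by
  classical
  rw [← one_div, ← map_one (algebraMap K[X] (RatFunc K)), denom_div _ hq.ne_zero]
  simp [hq.leadingCoeff]

variable {L : Type u} [Field L] (f : K →+* L) (a : L)

theorem eval_neg (x : RatFunc K) : eval f a (-x) = -eval f a x := by
  simp only [eval, num_neg, denom_neg, eval₂_neg, neg_div]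

theorem eval_inv_algebraMap {q : K[X]} (hq : q.Monic) :
    eval f a (algebraMap K[X] (RatFunc K) q)⁻¹ = (q.eval₂ f a)⁻¹ := by
  rw [eval, num_inv_algebraMap hq, denom_inv_algebraMap hq, eval₂_one, one_div]

/-- The rational functions regular at `a` with value at `a` in `R`: off the regular ones `eval`
is neither additive nor multiplicative. -/
def evalPreimage (R : Subring L) : Subring (RatFunc K) where
  carrier := {x | x.denom.eval₂ f a ≠ 0 ∧ eval f a x ∈ R}
  zero_mem' := ⟨by simp, by simp⟩
  one_mem' := ⟨by simp, by simp⟩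
  add_mem' {x y} hx hy := by
    refine ⟨fun h0 => ?_, by rw [eval_add f a hx.1 hy.1]; exact R.add_mem hx.2 hy.2⟩
    obtain h | h := mul_eq_zero.1 <| (eval₂_mul f a).symm.trans <|
      eval₂_eq_zero_of_dvd_of_eval₂_eq_zero f a (denom_add_dvd x y) h0
    exacts [hx.1 h, hy.1 h]
  mul_mem' {x y} hx hy := by
    refine ⟨fun h0 => ?_, by rw [eval_mul f a hx.1 hy.1]; exact R.mul_mem hx.2 hy.2⟩
    obtain h | h := mul_eq_zero.1 <| (eval₂_mul f a).symm.trans <|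
      eval₂_eq_zero_of_dvd_of_eval₂_eq_zero f a (denom_mul_dvd x y) h0
    exacts [hx.1 h, hy.1 h]
  neg_mem' {x} hx := ⟨by rw [denom_neg]; exact hx.1, by rw [eval_neg]; exact R.neg_mem hx.2⟩

variable {f a} {R : Subring L}

theorem C_mem_evalPreimage {c : K} (hc : f c ∈ R) : C c ∈ evalPreimage f a R :=
  ⟨by simp, by simpa using hc⟩

theorem X_mem_evalPreimage (ha : a ∈ R) : X ∈ evalPreimage f a R :=
  ⟨by simp, by simpa using ha⟩

theorem inv_algebraMap_mem_evalPreimage {q : K[X]} (hq : q.Monic) {x : R} (hx : IsUnit x)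
    (hqx : q.eval₂ f a = x) : (algebraMap K[X] (RatFunc K) q)⁻¹ ∈ evalPreimage f a R := by
  obtain ⟨hx0, hxR⟩ := Submonoid.isUnit_iff_and.1 hx
  exact ⟨by rwa [denom_inv_algebraMap hq, hqx], by rwa [eval_inv_algebraMap f a hq, hqx]⟩

end RatFunc

open Finset

theorem Polynomial.cyclotomic_mul_dvd_geom_sum_X_pow {R : Type*} [CommRing R] [IsDomain R]
    {n m : ℕ} (hn : 1 < n) (hm : 0 < m) :
    cyclotomic (n * m) R ∣ ∑ i ∈ range n, (X ^ m) ^ i := by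
  classical
  have hnm : n * m ≠ 0 := by positivity
  have hsub : m.divisors ⊆ (n * m).divisors := Nat.divisors_subset_of_dvd hnm (dvd_mul_left m n)
  have hmem : n * m ∈ (n * m).divisors \ m.divisors :=
    mem_sdiff.2 ⟨Nat.mem_divisors_self _ hnm, fun h => by nlinarith [Nat.divisor_le h]⟩
  have hprod : (∏ i ∈ (n * m).divisors \ m.divisors, cyclotomic i R) * (X ^ m - 1) =
      X ^ (n * m) - 1 := by
    rw [← prod_cyclotomic_eq_X_pow_sub_one hm, ← prod_cyclotomic_eq_X_pow_sub_one (by omega),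
      prod_sdiff hsub]
  have hgeom : (∑ i ∈ range n, (X ^ m) ^ i : R[X]) * (X ^ m - 1) = X ^ (n * m) - 1 := by
    rw [geom_sum_mul, ← pow_mul, mul_comm]
  rw [mul_right_cancel₀ (X_pow_sub_C_ne_zero hm 1) (hgeom.trans hprod.symm)]
  exact dvd_prod_of_mem _ hmem

theorem isUnit_geom_sum_of_coprime_orderOf {A : Type*} [CommRing A] [IsDomain A] {u : A}
    {p : ℕ} (hp : IsUnit (p : A)) (hu : p.Coprime (orderOf u)) :
    IsUnit (∑ i ∈ range p, u ^ i) := by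
  rcases eq_or_ne u 1 with rfl | hu1
  · simpa using hp
  obtain ⟨k, hk⟩ := exists_pow_eq_self_of_coprime hu
  refine IsUnit.of_mul_eq_one (∑ j ∈ range k, (u ^ p) ^ j) <|
    mul_right_cancel₀ (sub_ne_zero.2 hu1) ?_
  calc (∑ i ∈ range p, u ^ i) * (∑ j ∈ range k, (u ^ p) ^ j) * (u - 1)
      = (∑ j ∈ range k, (u ^ p) ^ j) * ((∑ i ∈ range p, u ^ i) * (u - 1)) := by ring
    _ = 1 * (u - 1) := by rw [geom_sum_mul, geom_sum_mul, hk, one_mul]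

theorem isUnit_aeval_cyclotomic_of_dvd {A : Type*} [CommRing A] [IsDomain A] {ζ : A}
    {p s : ℕ} (hp : 1 < p) (hps : p ∣ s) (hpA : IsUnit (p : A)) (hζ : p.Coprime (orderOf ζ)) :
    IsUnit (aeval ζ (cyclotomic s ℤ)) := by
  obtain ⟨m, rfl⟩ := hps
  rcases Nat.eq_zero_or_pos m with rfl | hm
  · simp
  have hdvd := map_dvd (aeval ζ) (cyclotomic_mul_dvd_geom_sum_X_pow (R := ℤ) hp hm)
  simp only [map_sum, map_pow, aeval_X] at hdvd
  exact isUnit_of_dvd_unit hdvd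
    (isUnit_geom_sum_of_coprime_orderOf hpA (hζ.coprime_dvd_right (orderOf_pow_dvd m)))

theorem Gd_le_evalPreimage {L : Type} [Field L] [Algebra ℚ L] {d : ℕ} {R : Subring L}
    (hd : IsUnit (d : R)) {ζ : R} (hζ : IsUnit ζ) (hcop : (orderOf ζ).Coprime d) :
    Gd d ≤ RatFunc.evalPreimage (algebraMap ℚ L) (ζ : L) R := by
  rw [Gd, Subring.closure_le]
  rintro x ((rfl | rfl | rfl) | ⟨s, -, hsd, rfl⟩)
  · simpa using RatFunc.C_mem_evalPreimage (a := (ζ : L)) (c := (d : ℚ)⁻¹)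
      (by simpa using Submonoid.inv_mem_of_isUnit hd)
  · exact RatFunc.X_mem_evalPreimage ζ.2
  · rw [← RatFunc.algebraMap_X]
    exact RatFunc.inv_algebraMap_mem_evalPreimage monic_X hζ (by simp)
  · have hΦ := isUnit_aeval_cyclotomic_of_dvd (ζ := ζ) hsd (Nat.gcd_dvd_left s d)
      (isUnit_of_dvd_unit (Nat.cast_dvd_cast (Nat.gcd_dvd_right s d)) hd)
      (Nat.Coprime.coprime_dvd_left (Nat.gcd_dvd_right s d) hcop.symm)
    rw [← RatFunc.algebraMap_X, aeval_algebraMap_apply, aeval_X_left_apply]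
    refine RatFunc.inv_algebraMap_mem_evalPreimage (cyclotomic.monic s ℚ) hΦ ?_
    rw [← map_cyclotomic_int s ℚ, eval₂_map, aeval_def, ← R.coe_subtype, hom_eval₂]
    congr 1
    exact Subsingleton.elim _ _

theorem evaluation_mem_cyclotomic_ring_general (d : ℕ) (hd : 1 ≤ d) (ξ : ℂ) (r : ℕ)
    (hodd : Odd r) (hcop : Nat.Coprime r d) (hprim : IsPrimitiveRoot ξ r)
    (b : ℤ) (g : LamHat d) :
    RatFunc.eval (algebraMap ℚ ℂ) (ξ ^ b)
        ((Quotient.out (g.1 r) : Gd d) : RatFunc ℚ) ∈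
      Subring.closure {((d : ℂ))⁻¹, ξ} := by
  set R := Subring.closure {((d : ℂ))⁻¹, ξ}
  have hr : r ≠ 0 := hodd.pos.ne'
  have : NeZero r := ⟨hr⟩
  have hζr : (ξ ^ b) ^ r = 1 := by
    rw [← zpow_natCast, ← zpow_mul, mul_comm, zpow_mul, zpow_natCast, hprim.pow_eq_one, one_zpow]
  obtain ⟨i, -, hi⟩ := hprim.eq_pow_of_pow_eq_one hζr
  let ζ : R := ⟨ξ ^ b, hi ▸ R.pow_mem (Subring.subset_closure (by simp)) i⟩
  have hζ : ζ ^ r = 1 := Subtype.ext hζr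
  have hdR : IsUnit (d : R) := IsUnit.of_mul_eq_one ⟨(d : ℂ)⁻¹, Subring.subset_closure (by simp)⟩
    (Subtype.ext (mul_inv_cancel₀ (Nat.cast_ne_zero.2 (by omega))))
  exact (Gd_le_evalPreimage hdR (IsUnit.of_pow_eq_one hζ hr)
    (hcop.coprime_dvd_left (orderOf_dvd_of_pow_eq_one hζ)) (g.1 r).out.2).2

/-- Let `ξ ∈ U_d` (a root of unity of odd order `r` coprime to `d`) and
`b` with `db ≡ 1 (mod r)`.  For every `g ∈ Λ̂_d`, the evaluation `ev_ξ(g)` — obtained by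
evaluating (a representative of) the `r`-th component of `g` at `t = ξ^b` — lies in the
subring `ℤ[1/d][ξ]` of `ℂ` generated by `1/d` and `ξ`. -/
theorem evaluation_mem_cyclotomic_ring (d : ℕ) (hd : 1 ≤ d) (ξ : ℂ) (r : ℕ)
    (hodd : Odd r) (hcop : Nat.Coprime r d) (hprim : IsPrimitiveRoot ξ r)
    (b : ℤ) (hb : (d : ℤ) * b ≡ 1 [ZMOD (r : ℤ)]) (g : LamHat d) :
    RatFunc.eval (algebraMap ℚ ℂ) (ξ ^ b)
        ((Quotient.out (g.1 r) : Gd d) : RatFunc ℚ) ∈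
      Subring.closure {((d : ℂ))⁻¹, ξ} :=
  evaluation_mem_cyclotomic_ring_general d hd ξ r hodd hcop hprim b g
end
end

section
/- Every element f of Γ_d, viewed as a rational function of t, is regular at t = 1 (each inverted Φ_s(t) with gcd(s,d) > 1 satisfies Φ_s(1) = 1 or a prime dividing d, hence a unit of ℤ[1/d]), its Taylor series at t = 1 lies in ℤ[1/d][[t−1]], and after the substitution t − 1 = Σ_{n≥1} C(1/d, n)(q−1)^n (where C(1/d,n) := (1/d)(1/d−1)⋯(1/d−n+1)/n! ∈ ℤ[1/d] is the generalized binomial coefficient), the resulting formal power series T_1(f) lies in ℤ[1/d][[q−1]]. -/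
/-! The rational functions that are regular at `t = 1` and whose Taylor series at `1` has
coefficients in `ℤ[1/d]` form a subring of `ℚ(t)`, so it is enough to treat the generators
of `Γ_d`. For `1/Φ_s` this works because `Φ_s(1)` is `1`, or a prime `p` when `s` is a power
of `p`, and then `p ∣ gcd(s, d)` is a unit of `ℤ[1/d]`. The series
`1 + Σ_{n≥1} C(1/d,n)(q-1)^n` is the binomial series `(1 + X)^{1/d}`: its `d`-th power is
`1 + X`, and extracting a `d`-th root with constant term `1` only ever divides by `d`. -/

noncomputable section

open Polynomial

/-- The Taylor series at `t = 1` of a rational function `f = num/denom`: the power series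
`num(1+X)·(denom(1+X))⁻¹` in `X = t − 1` (the inverse being taken in `ℚ[[X]]`, which is
legitimate whenever `f` is regular at `t = 1`, i.e. `denom(1) ≠ 0`). -/
def taylorOne (x : RatFunc ℚ) : PowerSeries ℚ :=
  (((RatFunc.num x).comp (Polynomial.X + 1) : ℚ[X]) : PowerSeries ℚ) *
    ((((RatFunc.denom x).comp (Polynomial.X + 1) : ℚ[X]) : PowerSeries ℚ))⁻¹

/-- The series `t − 1 = Σ_{n≥1} C(1/d, n)·(q−1)^n`, a power series in `X = q − 1`. -/
def binomSeries (d : ℕ) : PowerSeries ℚ :=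
  PowerSeries.mk fun n => if n = 0 then 0 else Ring.choose ((d : ℚ))⁻¹ n

/-- Substitution `F(σ(X))` of a power series `σ` with zero constant term into a power
series `F`, given coefficient-wise by the finite sums
`coeff_k (F∘σ) = Σ_{j≤k} coeff_j F · coeff_k (σ^j)`. -/
def substSeries (F σ : PowerSeries ℚ) : PowerSeries ℚ :=
  PowerSeries.mk fun k =>
    ∑ j ∈ Finset.range (k + 1), (PowerSeries.coeff j F) * PowerSeries.coeff k (σ ^ j)

open PowerSeries

def powerSeriesOver {R : Type*} [CommRing R] (S : Subring R) : Subring R⟦X⟧ :=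
  (PowerSeries.map S.subtype).range

section powerSeriesOver

variable {R : Type*} [CommRing R] {S : Subring R}

theorem mem_powerSeriesOver {F : R⟦X⟧} : F ∈ powerSeriesOver S ↔ ∀ n, coeff n F ∈ S := by
  constructor
  · rintro ⟨G, rfl⟩ n
    simp
  · intro hF
    exact ⟨PowerSeries.mk fun n => ⟨coeff n F, hF n⟩, by ext; simp⟩

theorem X_mem_powerSeriesOver : (X : R⟦X⟧) ∈ powerSeriesOver S :=
  ⟨X, map_X _⟩

theorem coe_polynomial_mem_powerSeriesOver {p : R[X]} (hp : ∀ n, p.coeff n ∈ S) :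
    (p : R⟦X⟧) ∈ powerSeriesOver S :=
  mem_powerSeriesOver.2 fun n => by simpa using hp n

theorem inv_mem_powerSeriesOver {k : Type*} [Field k] {S : Subring k} {F : k⟦X⟧}
    (hF : F ∈ powerSeriesOver S) (h0 : (constantCoeff F)⁻¹ ∈ S) :
    F⁻¹ ∈ powerSeriesOver S := by
  rw [mem_powerSeriesOver] at hF ⊢
  intro n
  induction n using Nat.strong_induction_on with
  | _ n ih =>
    rw [coeff_inv]
    split_ifs
    · exact h0
    · refine mul_mem (neg_mem h0) (sum_mem fun x _ => ?_)
      split_ifs with hx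
      · exact mul_mem (hF _) (ih _ hx)
      · exact zero_mem S

end powerSeriesOver

/-- With `T` the truncation of `F` below degree `n` and `X ^ n ∣ F - T`, the identity
`F ^ d - T ^ d = (∑ i < d, F ^ i T ^ (d - 1 - i)) (F - T)` gives
`coeff n (F ^ d) = coeff n (T ^ d) + d * coeff n F`, where `T` is already known to lie
over `S`. -/
theorem mem_powerSeriesOver_of_pow_mem {k : Type*} [Field k] {S : Subring k} {d : ℕ}
    (hd : (d : k)⁻¹ ∈ S) (hd0 : (d : k) ≠ 0) {F : k⟦X⟧} (hF0 : constantCoeff F = 1)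
    (hFd : F ^ d ∈ powerSeriesOver S) : F ∈ powerSeriesOver S := by
  rw [mem_powerSeriesOver]
  intro n
  induction n using Nat.strong_induction_on with
  | _ n ih =>
  rcases Nat.eq_zero_or_pos n with rfl | hn
  · simp [hF0]
  set T : k⟦X⟧ := ↑(trunc n F)
  have hT : T ∈ powerSeriesOver S := coe_polynomial_mem_powerSeriesOver fun m => by
    rw [coeff_trunc]
    split_ifs with hm
    exacts [ih m hm, zero_mem S]
  have hT0 : constantCoeff T = 1 := by
    rw [← coeff_zero_eq_constantCoeff_apply, Polynomial.coeff_coe, coeff_trunc, if_pos hn,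
      coeff_zero_eq_constantCoeff_apply, hF0]
  obtain ⟨E, hE⟩ : PowerSeries.X ^ n ∣ F - T := PowerSeries.X_pow_dvd_iff.2 fun m hm => by
    simp [T, coeff_trunc, hm]
  have hcoeff : coeff n (F ^ d) - coeff n (T ^ d) = d * coeff n F := by
    have hEn : constantCoeff E = coeff n F := by
      have := congrArg (PowerSeries.coeff n) hE
      rw [map_sub, Polynomial.coeff_coe, coeff_trunc, if_neg (lt_irrefl n), sub_zero,
        PowerSeries.coeff_X_pow_mul', if_pos le_rfl, Nat.sub_self,
        coeff_zero_eq_constantCoeff_apply] at this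
      exact this.symm
    rw [← map_sub, ← geom_sum₂_mul, hE, mul_left_comm, PowerSeries.coeff_X_pow_mul',
      if_pos le_rfl, Nat.sub_self, coeff_zero_eq_constantCoeff_apply, map_mul, hEn, map_sum]
    simp [hF0, hT0]
  have hFn : coeff n F = (d : k)⁻¹ * (coeff n (F ^ d) - coeff n (T ^ d)) := by
    rw [hcoeff, inv_mul_cancel_left₀ hd0]
  rw [hFn]
  exact mul_mem hd (sub_mem (mem_powerSeriesOver.1 hFd n)
    (mem_powerSeriesOver.1 (pow_mem hT d) n))

theorem binomialSeries_natCast_mul {R A : Type*} [CommRing R] [BinomialRing R] [Ring A]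
    [Algebra R A] (m : ℕ) (r : R) :
    PowerSeries.binomialSeries A (m * r) = PowerSeries.binomialSeries A r ^ m := by
  induction m with
  | zero => simp
  | succ m ih => rw [Nat.cast_succ, add_one_mul, binomialSeries_add, ih, pow_succ]

theorem binomialSeries_inv_natCast_pow {d : ℕ} (hd : d ≠ 0) :
    PowerSeries.binomialSeries ℚ ((d : ℚ)⁻¹) ^ d = 1 + PowerSeries.X := by
  rw [← binomialSeries_natCast_mul, mul_inv_cancel₀ (Nat.cast_ne_zero.2 hd), ← Nat.cast_one,
    binomialSeries_nat, pow_one]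

theorem binomialSeries_inv_natCast_mem {d : ℕ} (hd : d ≠ 0) :
    PowerSeries.binomialSeries ℚ ((d : ℚ)⁻¹) ∈
      powerSeriesOver (Subring.closure {((d : ℚ))⁻¹}) := by
  refine mem_powerSeriesOver_of_pow_mem (Subring.subset_closure (Set.mem_singleton _))
    (Nat.cast_ne_zero.2 hd) (binomialSeries_constantCoeff _) ?_
  rw [binomialSeries_inv_natCast_pow hd]
  exact add_mem (one_mem _) X_mem_powerSeriesOver

theorem binomSeries_eq (d : ℕ) :
    binomSeries d = PowerSeries.binomialSeries ℚ ((d : ℚ)⁻¹) - 1 := by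
  ext (_ | n) <;> simp [binomSeries]

def expandAtOne (R : Type*) [CommRing R] : R[X] →+* R⟦X⟧ :=
  Polynomial.coeToPowerSeries.ringHom.comp (compRingHom (Polynomial.X + 1))

section expandAtOne

variable {R : Type*} [CommRing R]

theorem expandAtOne_apply (p : R[X]) :
    expandAtOne R p = ((p.comp (Polynomial.X + 1) : R[X]) : R⟦X⟧) := rfl

theorem constantCoeff_expandAtOne (p : R[X]) :
    constantCoeff (expandAtOne R p) = p.eval 1 := by
  rw [expandAtOne_apply, ← coeff_zero_eq_constantCoeff_apply, Polynomial.coeff_coe,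
    Polynomial.coeff_zero_eq_eval_zero, Polynomial.eval_comp]
  simp

theorem expandAtOne_mem_powerSeriesOver {S : Subring R} {p : R[X]} (hp : ∀ n, p.coeff n ∈ S) :
    expandAtOne R p ∈ powerSeriesOver S := by
  rw [expandAtOne_apply]
  refine coe_polynomial_mem_powerSeriesOver fun n => ?_
  rw [Polynomial.comp_eq_sum_left, Polynomial.sum_def, Polynomial.finsetSum_coeff]
  refine sum_mem fun i _ => ?_
  rw [Polynomial.coeff_C_mul, Polynomial.coeff_X_add_one_pow]
  exact mul_mem (hp i) (natCast_mem _ _)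

end expandAtOne

theorem taylorOne_eq (x : RatFunc ℚ) :
    taylorOne x = expandAtOne ℚ x.num * (expandAtOne ℚ x.denom)⁻¹ := rfl

theorem eval_one_denom_div_ne_zero {p q : ℚ[X]} (hq : q.eval 1 ≠ 0) :
    (algebraMap ℚ[X] (RatFunc ℚ) p / algebraMap ℚ[X] (RatFunc ℚ) q).denom.eval 1 ≠ 0 := by
  obtain ⟨c, hc⟩ := RatFunc.denom_div_dvd p q
  intro h
  exact hq (by rw [hc, Polynomial.eval_mul, h, zero_mul])

theorem taylorOne_div {p q : ℚ[X]} (hq : q.eval 1 ≠ 0) :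
    taylorOne (algebraMap ℚ[X] (RatFunc ℚ) p / algebraMap ℚ[X] (RatFunc ℚ) q) =
      expandAtOne ℚ p * (expandAtOne ℚ q)⁻¹ := by
  set x := algebraMap ℚ[X] (RatFunc ℚ) p / algebraMap ℚ[X] (RatFunc ℚ) q
  have hq0 : q ≠ 0 := by rintro rfl; simp at hq
  have hcross : x.num * q = p * x.denom := (RatFunc.num_mul_eq_mul_denom_iff hq0).2 rfl
  have hden : constantCoeff (expandAtOne ℚ x.denom) ≠ 0 := by
    rw [constantCoeff_expandAtOne]; exact eval_one_denom_div_ne_zero hq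
  have hq' : constantCoeff (expandAtOne ℚ q) ≠ 0 := by
    rwa [constantCoeff_expandAtOne]
  rw [taylorOne_eq, PowerSeries.eq_mul_inv_iff_mul_eq hq', mul_right_comm,
    ← map_mul, hcross, map_mul, mul_assoc, PowerSeries.mul_inv_cancel _ hden, mul_one]

theorem regularAtOne_div {S : Subring ℚ} {p q : ℚ[X]} (hq : q.eval 1 ≠ 0)
    (hpq : expandAtOne ℚ p * (expandAtOne ℚ q)⁻¹ ∈ powerSeriesOver S) :
    (algebraMap ℚ[X] (RatFunc ℚ) p / algebraMap ℚ[X] (RatFunc ℚ) q).denom.eval 1 ≠ 0 ∧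
      taylorOne (algebraMap ℚ[X] (RatFunc ℚ) p / algebraMap ℚ[X] (RatFunc ℚ) q) ∈
        powerSeriesOver S :=
  ⟨eval_one_denom_div_ne_zero hq, taylorOne_div hq ▸ hpq⟩

def taylorIntegralAtOne (S : Subring ℚ) : Subring (RatFunc ℚ) where
  carrier := {x | x.denom.eval 1 ≠ 0 ∧ taylorOne x ∈ powerSeriesOver S}
  mul_mem' := by
    rintro x y ⟨hx, hTx⟩ ⟨hy, hTy⟩
    rw [← RatFunc.num_div_denom x, ← RatFunc.num_div_denom y, div_mul_div_comm, ← map_mul,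
      ← map_mul]
    refine regularAtOne_div (by simpa using mul_ne_zero hx hy) ?_
    convert mul_mem hTx hTy using 1
    rw [taylorOne_eq, taylorOne_eq, map_mul, map_mul, PowerSeries.mul_inv_rev]
    ring
  add_mem' := by
    rintro x y ⟨hx, hTx⟩ ⟨hy, hTy⟩
    have hx' := PowerSeries.mul_inv_cancel _ ((constantCoeff_expandAtOne _).trans_ne hx)
    have hy' := PowerSeries.mul_inv_cancel _ ((constantCoeff_expandAtOne _).trans_ne hy)
    rw [← RatFunc.num_div_denom x, ← RatFunc.num_div_denom y,
      div_add_div _ _ (by simpa using x.denom_ne_zero) (by simpa using y.denom_ne_zero),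
      ← map_mul, ← map_mul, ← map_mul, ← map_add]
    refine regularAtOne_div (by simpa using mul_ne_zero hx hy) ?_
    convert add_mem hTx hTy using 1
    rw [taylorOne_eq, taylorOne_eq, map_add, map_mul, map_mul, map_mul, PowerSeries.mul_inv_rev]
    linear_combination (expandAtOne ℚ x.num * (expandAtOne ℚ x.denom)⁻¹) * hy' +
      (expandAtOne ℚ y.num * (expandAtOne ℚ y.denom)⁻¹) * hx'
  neg_mem' := by
    rintro x ⟨hx, hTx⟩
    rw [← RatFunc.num_div_denom x, ← neg_div, ← map_neg]
    refine regularAtOne_div hx ?_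
    convert neg_mem hTx using 1
    rw [taylorOne_eq, map_neg, neg_mul]
  one_mem' := by
    simpa using regularAtOne_div (S := S) (p := 1) (q := 1) (by simp) (by simp)
  zero_mem' := by
    simpa using regularAtOne_div (S := S) (p := 0) (q := 1) (by simp) (by simp)

theorem inv_algebraMap_mem_taylorIntegralAtOne {S : Subring ℚ} {q : ℚ[X]}
    (hq : ∀ n, q.coeff n ∈ S) (hq1 : q.eval 1 ≠ 0) (hq1' : (q.eval 1)⁻¹ ∈ S) :
    (algebraMap ℚ[X] (RatFunc ℚ) q)⁻¹ ∈ taylorIntegralAtOne S := by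
  rw [inv_eq_one_div, ← map_one (algebraMap ℚ[X] (RatFunc ℚ))]
  refine regularAtOne_div hq1 ?_
  rw [map_one, one_mul]
  exact inv_mem_powerSeriesOver (expandAtOne_mem_powerSeriesOver hq)
    ((constantCoeff_expandAtOne q).symm ▸ hq1')

theorem algebraMap_mem_taylorIntegralAtOne {S : Subring ℚ} {p : ℚ[X]}
    (hp : ∀ n, p.coeff n ∈ S) :
    algebraMap ℚ[X] (RatFunc ℚ) p ∈ taylorIntegralAtOne S := by
  rw [← div_one (algebraMap ℚ[X] (RatFunc ℚ) p), ← map_one (algebraMap ℚ[X] (RatFunc ℚ))]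
  refine regularAtOne_div (by simp) ?_
  rw [map_one, inv_one, mul_one]
  exact expandAtOne_mem_powerSeriesOver hp

theorem inv_natCast_mem_closure_inv_natCast {d p : ℕ} (hd : d ≠ 0) (hp : p ∣ d) :
    (p : ℚ)⁻¹ ∈ Subring.closure {((d : ℚ))⁻¹} := by
  obtain ⟨m, rfl⟩ := hp
  have hm : (m : ℚ) ≠ 0 := by exact_mod_cast right_ne_zero_of_mul hd
  have hpm : (p : ℚ)⁻¹ = m * ((p * m : ℕ) : ℚ)⁻¹ := by
    push_cast
    field_simp
  rw [hpm]
  exact mul_mem (natCast_mem _ m) (Subring.subset_closure (Set.mem_singleton _))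

theorem exists_dvd_eval_one_cyclotomic_eq {R : Type*} [CommRing R] {s d : ℕ}
    (h : 1 < s.gcd d) : ∃ p, p ∣ d ∧ (cyclotomic s R).eval 1 = p := by
  by_cases hs : IsPrimePow s
  · obtain ⟨p, k, hp, hk, rfl⟩ := (isPrimePow_nat_iff s).1 hs
    obtain ⟨k, rfl⟩ := Nat.exists_eq_add_one_of_ne_zero hk.ne'
    have : Fact p.Prime := ⟨hp⟩
    refine ⟨p, ?_, eval_one_cyclotomic_prime_pow k⟩
    by_contra hpd
    have := ((Nat.Prime.coprime_iff_not_dvd hp).2 hpd).pow_left (k + 1)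
    rw [Nat.Coprime] at this
    omega
  · refine ⟨1, one_dvd d, ?_⟩
    rw [Nat.cast_one]
    refine eval_one_cyclotomic_not_prime_pow fun hp k hk => ?_
    rcases k with _ | k
    · subst hk
      simp at h
    · exact hs ((isPrimePow_nat_iff s).2 ⟨_, k + 1, hp, k.succ_pos, hk⟩)

theorem Gd_le_taylorIntegralAtOne {d : ℕ} (hd : d ≠ 0) :
    Gd d ≤ taylorIntegralAtOne (Subring.closure {((d : ℚ))⁻¹}) := by
  have hX : ∀ n, (Polynomial.X : ℚ[X]).coeff n ∈ Subring.closure {((d : ℚ))⁻¹} := fun n => by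
    rw [Polynomial.coeff_X]
    split_ifs
    exacts [one_mem _, zero_mem _]
  rw [Gd, Subring.closure_le]
  rintro x ((rfl | rfl | rfl) | ⟨s, -, hs, rfl⟩)
  · rw [← map_natCast (algebraMap ℚ[X] (RatFunc ℚ))]
    refine inv_algebraMap_mem_taylorIntegralAtOne (fun n => ?_) (by simpa using hd)
      (by simpa using Subring.subset_closure (Set.mem_singleton _))
    rw [Polynomial.coeff_natCast_ite]
    split_ifs
    exacts [natCast_mem _ d, zero_mem _]
  · rw [← RatFunc.algebraMap_X]
    exact algebraMap_mem_taylorIntegralAtOne hX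
  · rw [← RatFunc.algebraMap_X]
    exact inv_algebraMap_mem_taylorIntegralAtOne hX (by simp) (by simp)
  · obtain ⟨p, hpd, hp⟩ := exists_dvd_eval_one_cyclotomic_eq (R := ℚ) hs
    rw [← RatFunc.algebraMap_X, aeval_algebraMap_apply, aeval_X_left_apply, ← map_cyclotomic_int]
    refine inv_algebraMap_mem_taylorIntegralAtOne (fun n => ?_) ?_ ?_
    · rw [Polynomial.coeff_map]
      exact intCast_mem _ _
    · rw [map_cyclotomic_int, hp]
      exact Nat.cast_ne_zero.2 (ne_zero_of_dvd_ne_zero hd hpd)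
    · rw [map_cyclotomic_int, hp]
      exact inv_natCast_mem_closure_inv_natCast hd hpd

theorem substSeries_mem_powerSeriesOver {S : Subring ℚ} {F σ : ℚ⟦X⟧}
    (hF : F ∈ powerSeriesOver S) (hσ : σ ∈ powerSeriesOver S) :
    substSeries F σ ∈ powerSeriesOver S :=
  mem_powerSeriesOver.2 fun k => by
    rw [substSeries, coeff_mk]
    exact sum_mem fun j _ => mul_mem (mem_powerSeriesOver.1 hF j)
      (mem_powerSeriesOver.1 (pow_mem hσ j) k)

/-- Every `f ∈ Γ_d` is regular at `t = 1`, its Taylor series at `t = 1`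
lies in `ℤ[1/d][[t−1]]`, the generalized binomial coefficients `C(1/d,n)` lie in `ℤ[1/d]`,
and after substituting `t − 1 = Σ_{n≥1} C(1/d,n)(q−1)^n` the resulting series `T_1(f)` lies
in `ℤ[1/d][[q−1]]`.  Here `ℤ[1/d]` is the subring of `ℚ` generated by `1/d`. -/
theorem taylor_expansion_integral (d : ℕ) (hd : 1 ≤ d) (x : Gd d) :
    (RatFunc.denom (x : RatFunc ℚ)).eval 1 ≠ 0 ∧
    (∀ n, PowerSeries.coeff n (taylorOne (x : RatFunc ℚ)) ∈
      Subring.closure {((d : ℚ))⁻¹}) ∧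
    (∀ n, Ring.choose ((d : ℚ))⁻¹ n ∈ Subring.closure {((d : ℚ))⁻¹}) ∧
    (∀ n, PowerSeries.coeff n (substSeries (taylorOne (x : RatFunc ℚ)) (binomSeries d)) ∈
      Subring.closure {((d : ℚ))⁻¹}) := by
  have hd0 : d ≠ 0 := Nat.one_le_iff_ne_zero.1 hd
  obtain ⟨hreg, htaylor⟩ := Gd_le_taylorIntegralAtOne hd0 x.2
  have hbinom := binomialSeries_inv_natCast_mem hd0
  have hbinomSeries : binomSeries d ∈ powerSeriesOver (Subring.closure {((d : ℚ))⁻¹}) := by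
    rw [binomSeries_eq]
    exact sub_mem hbinom (one_mem _)
  refine ⟨hreg, mem_powerSeriesOver.1 htaylor, fun n => ?_,
    mem_powerSeriesOver.1 (substSeries_mem_powerSeriesOver htaylor hbinomSeries)⟩
  simpa using mem_powerSeriesOver.1 hbinom n

end
end
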